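/- arXiv:1712.01064 — 10 statements merged into one kernel-verified Lean document; each statement's English description precedes it below -/
import Mathlib

section
/- Let 0 < q < ∞ and let f ∈ L^q(ℝ^n) (Lebesgue measure). Then the weak norm equals the strong norm, ‖f‖_{L^{q,∞}} = ‖f‖_{L^q}, if and only if there exist a constant C ≥ 0 and a measurable set E ⊆ ℝ^n such that |f(x)| = C·χ_E(x) for almost every x. -/
open MeasureTheory ENNReal Filter Topology Set

noncomputable section

/-- `ℝ^n` with the Euclidean norm and Lebesgue measure. -/
abbrev Euc (n : ℕ) : Type := EuclideanSpace ℝ (Fin n)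

/-- The weak `L^q` quasi-norm `sup_{λ>0} λ·μ{x : |h x| > λ}^{1/q}`. -/
def weakNorm {α : Type*} [MeasurableSpace α] (μ : Measure α) (q : ℝ) (h : α → ℝ) : ℝ≥0∞ :=
  ⨆ (l : ℝ) (_ : 0 < l), ENNReal.ofReal l * μ {x | l < |h x|} ^ (1 / q)

/-- The strong `L^q` norm `(∫ |h|^q)^{1/q}`. -/
def strongNorm {α : Type*} [MeasurableSpace α] (μ : Measure α) (q : ℝ) (h : α → ℝ) : ℝ≥0∞ :=
  (∫⁻ x, ENNReal.ofReal |h x| ^ q ∂μ) ^ (1 / q)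

/-- The mixed norm `‖f‖_{L^{(p1,p2)}}` on `ℝ^n × ℝ^m` (inner exponent `p1` in `x`,
outer exponent `p2` in `y`). -/
def mixedNorm {n m : ℕ} (p1 p2 : ℝ) (f : Euc n × Euc m → ℝ) : ℝ≥0∞ :=
  (∫⁻ y : Euc m, (∫⁻ x : Euc n, ENNReal.ofReal |f (x, y)| ^ p1) ^ (p2 / p1)) ^ (1 / p2)

/-- The mixed weak norm `‖f‖_{L^{(p1,p2),∞}} = sup_{λ>0} λ·‖χ_{{|f|>λ}}‖_{L^{(p1,p2)}}`. -/
def mixedWeakNorm {n m : ℕ} (p1 p2 : ℝ) (f : Euc n × Euc m → ℝ) : ℝ≥0∞ :=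
  ⨆ (l : ℝ) (_ : 0 < l), ENNReal.ofReal l *
    mixedNorm p1 p2 ({z | l < |f z|}.indicator fun _ => (1 : ℝ))

/-- The iterated weak norm `‖f‖_{L^{p2,∞}(L^{p1,∞})}`: the weak `L^{p2}` quasi-norm in `y`
of the weak `L^{p1}` quasi-norm in `x`. -/
def iteratedWeakNorm {n m : ℕ} (p1 p2 : ℝ) (f : Euc n × Euc m → ℝ) : ℝ≥0∞ :=
  ⨆ (l : ℝ) (_ : 0 < l), ENNReal.ofReal l *
    volume {y : Euc m | ENNReal.ofReal l < weakNorm volume p1 fun x => f (x, y)} ^ (1 / p2)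

/-- The mixed weak norm for `[0,∞]`-valued functions. -/
def mixedWeakNormE {n m : ℕ} (p1 p2 : ℝ) (f : Euc n × Euc m → ℝ≥0∞) : ℝ≥0∞ :=
  ⨆ (l : ℝ) (_ : 0 < l), ENNReal.ofReal l *
    mixedNorm p1 p2 ({z | ENNReal.ofReal l < f z}.indicator fun _ => (1 : ℝ))

section AuxLemmas

variable {α : Type*} [MeasurableSpace α] {μ : MeasureTheory.Measure α}

private lemma term_rw {q : ℝ} (hq : 0 < q) (l : ℝ) (m : ℝ≥0∞) :
    ENNReal.ofReal l * m ^ (1 / q) = (ENNReal.ofReal l ^ q * m) ^ (1 / q) := by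
  rw [ENNReal.mul_rpow_of_nonneg _ _ (le_of_lt (by positivity : (0:ℝ) < 1/q)),
    ← ENNReal.rpow_mul, mul_one_div_cancel hq.ne', ENNReal.rpow_one]

private lemma decomp {f : α → ℝ} (hf : Measurable f) {q : ℝ} (hq : 0 < q) {l : ℝ} :
    ∫⁻ x, ENNReal.ofReal |f x| ^ q ∂μ =
      (∫⁻ x in {x | |f x| ≤ l}, ENNReal.ofReal |f x| ^ q ∂μ) +
      (ENNReal.ofReal l ^ q * μ {x | l < |f x|} +
       ∫⁻ x in {x | l < |f x|}, (ENNReal.ofReal |f x| ^ q - ENNReal.ofReal l ^ q) ∂μ) := by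
  have hA : MeasurableSet {x | l < |f x|} := measurableSet_lt measurable_const hf.abs
  have hcompl : {x | l < |f x|}ᶜ = {x | |f x| ≤ l} := by ext x; simp [not_lt]
  have h1 : ∫⁻ x, ENNReal.ofReal |f x| ^ q ∂μ
      = (∫⁻ x in {x | l < |f x|}, ENNReal.ofReal |f x| ^ q ∂μ)
        + (∫⁻ x in {x | |f x| ≤ l}, ENNReal.ofReal |f x| ^ q ∂μ) := by
    rw [← hcompl]
    exact (MeasureTheory.lintegral_add_compl _ hA).symm
  have h2 : ∫⁻ x in {x | l < |f x|}, ENNReal.ofReal |f x| ^ q ∂μ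
      = ENNReal.ofReal l ^ q * μ {x | l < |f x|}
        + ∫⁻ x in {x | l < |f x|}, (ENNReal.ofReal |f x| ^ q - ENNReal.ofReal l ^ q) ∂μ := by
    have hpt : ∀ x ∈ {x | l < |f x|}, ENNReal.ofReal |f x| ^ q
        = ENNReal.ofReal l ^ q + (ENNReal.ofReal |f x| ^ q - ENNReal.ofReal l ^ q) := by
      intro x hx
      have hle : ENNReal.ofReal l ^ q ≤ ENNReal.ofReal |f x| ^ q :=
        ENNReal.rpow_le_rpow (ENNReal.ofReal_le_ofReal (le_of_lt hx)) hq.le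
      exact (add_tsub_cancel_of_le hle).symm
    rw [MeasureTheory.setLIntegral_congr_fun hA hpt,
      MeasureTheory.lintegral_add_left measurable_const, MeasureTheory.setLIntegral_const]
  rw [h1, h2]
  ring

end AuxLemmas
/-- For `0 < q < ∞` and `f ∈ L^q(ℝ^n)`, the weak norm equals the strong norm,
`‖f‖_{L^{q,∞}} = ‖f‖_{L^q}`, if and only if there are a constant `C ≥ 0` and a measurable set
`S ⊆ ℝ^n` with `|f x| = C·χ_S x` for a.e. `x`. -/
theorem stmt0 (n : ℕ) (q : ℝ) (hq : 0 < q) (f : Euc n → ℝ) (hf : Measurable f)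
    (hLq : strongNorm (volume : Measure (Euc n)) q f < ⊤) :
    weakNorm (volume : Measure (Euc n)) q f = strongNorm (volume : Measure (Euc n)) q f ↔
      ∃ (C : ℝ) (S : Set (Euc n)), 0 ≤ C ∧ MeasurableSet S ∧
        ∀ᵐ x ∂(volume : Measure (Euc n)),
          |f x| = C * S.indicator (fun _ => (1 : ℝ)) x := by
  set μ := (volume : Measure (Euc n)) with hμdef
  have hfa : Measurable fun x => |f x| := hf.abs
  have hg : Measurable fun x => ENNReal.ofReal |f x| ^ q := hfa.ennreal_ofReal.pow_const q
  set I := ∫⁻ x, ENNReal.ofReal |f x| ^ q ∂μ with hI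
  have hstrongdef : strongNorm μ q f = I ^ (1/q) := rfl
  have hq1 : (0:ℝ) < 1/q := by positivity
  have hItop : I ≠ ⊤ := by
    intro h
    rw [hstrongdef, h, ENNReal.top_rpow_of_pos hq1] at hLq
    exact lt_irrefl _ hLq
  -- from a zero value of the density, |f x| = 0
  have hgzero : ∀ x, ENNReal.ofReal |f x| ^ q = 0 → |f x| = 0 := by
    intro x hx
    rcases ENNReal.rpow_eq_zero_iff.mp hx with ⟨h1, _⟩ | ⟨h1, _⟩
    · exact le_antisymm (ENNReal.ofReal_eq_zero.mp h1) (abs_nonneg _)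
    · exact absurd h1 ENNReal.ofReal_ne_top
  constructor
  · intro heq
    by_cases h0 : ∀ᵐ x ∂μ, |f x| = 0
    · exact ⟨0, ∅, le_refl 0, MeasurableSet.empty, by
        filter_upwards [h0] with x hx; simp [hx]⟩
    have hI0 : I ≠ 0 := by
      intro h
      apply h0
      filter_upwards [(lintegral_eq_zero_iff hg).mp h] with x hx
      exact hgzero x hx
    -- Step B: the deficiency can be made arbitrarily small
    have hB : ∀ ε : ℝ≥0∞, 0 < ε → ∃ l : ℝ, 0 < l ∧
        (∫⁻ x in {x | |f x| ≤ l}, ENNReal.ofReal |f x| ^ q ∂μ)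
        + (∫⁻ x in {x | l < |f x|}, (ENNReal.ofReal |f x| ^ q - ENNReal.ofReal l ^ q) ∂μ) < ε := by
      by_contra hcon
      push_neg at hcon
      obtain ⟨ε, hε, hall⟩ := hcon
      have hεle : ε ≤ I := by
        refine le_trans (hall 1 one_pos) ?_
        rw [hI, decomp (μ := μ) hf hq (l := 1)]
        gcongr
        exact le_add_self
      have hws : weakNorm μ q f ≤ (I - ε) ^ (1/q) := by
        rw [weakNorm]
        refine iSup₂_le fun l hl => ?_
        rw [term_rw hq]
        refine ENNReal.rpow_le_rpow ?_ hq1.le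
        refine ENNReal.le_sub_of_add_le_right (ne_top_of_le_ne_top hItop hεle) ?_
        calc ENNReal.ofReal l ^ q * μ {x | l < |f x|} + ε
            ≤ ENNReal.ofReal l ^ q * μ {x | l < |f x|} +
              ((∫⁻ x in {x | |f x| ≤ l}, ENNReal.ofReal |f x| ^ q ∂μ)
              + (∫⁻ x in {x | l < |f x|}, (ENNReal.ofReal |f x| ^ q - ENNReal.ofReal l ^ q) ∂μ)) := by
              gcongr
              exact hall l hl
          _ = I := by rw [hI, decomp (μ := μ) hf hq (l := l)]; ring
      have hlt : (I - ε) ^ (1/q) < I ^ (1/q) :=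
        ENNReal.rpow_lt_rpow (ENNReal.sub_lt_self hItop hI0 hε.ne') hq1
      rw [← hstrongdef, ← heq] at hlt
      exact absurd hws (not_le.mpr hlt)
    set t := essSup (fun x => ENNReal.ofReal |f x|) μ with ht
    have hae2 : ∀ᵐ x ∂μ, ENNReal.ofReal |f x| ≤ t := ENNReal.ae_le_essSup (fun x => ENNReal.ofReal |f x|)
    have hpos : ∀ s' : ℝ, ENNReal.ofReal s' < t → μ {x | s' < |f x|} ≠ 0 := by
      intro s' hs' hcon
      have hb : ∀ᵐ x ∂μ, ENNReal.ofReal |f x| ≤ ENNReal.ofReal s' := by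
        filter_upwards [measure_eq_zero_iff_ae_notMem.mp hcon] with x hx
        simp only [Set.mem_setOf_eq, not_lt] at hx
        exact ENNReal.ofReal_le_ofReal hx
      exact absurd (essSup_le_of_ae_le _ hb) (not_le.mpr hs')
    -- Step C
    have hφ : ∀ s : ℝ, 0 < s → ENNReal.ofReal s < t →
        ∫⁻ x in {x | |f x| ≤ s}, ENNReal.ofReal |f x| ^ q ∂μ = 0 := by
      intro s hs hst
      by_contra hne
      have hεpos : 0 < ∫⁻ x in {x | |f x| ≤ s}, ENNReal.ofReal |f x| ^ q ∂μ :=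
        pos_iff_ne_zero.mpr hne
      obtain ⟨s', hs'0, hss', hs't⟩ := ENNReal.lt_iff_exists_real_btwn.mp hst
      have hss : s < s' := (ENNReal.ofReal_lt_ofReal_iff_of_nonneg hs.le).mp hss'
      set δ := (ENNReal.ofReal s' ^ q - ENNReal.ofReal s ^ q) * μ {x | s' < |f x|} with hδ
      have hδpos : 0 < δ := by
        rw [hδ]
        refine ENNReal.mul_pos ?_ (hpos s' hs't)
        exact (tsub_pos_iff_lt.mpr (ENNReal.rpow_lt_rpow hss' hq)).ne'
      obtain ⟨l, hl, hsmall⟩ := hB (min δ (∫⁻ x in {x | |f x| ≤ s}, ENNReal.ofReal |f x| ^ q ∂μ))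
        (lt_min hδpos hεpos)
      rcases le_or_gt l s with hls | hls
      · -- then ψ(l) ≥ δ, contradiction
        have h1 : {x | s' < |f x|} ⊆ {x | l < |f x|} := fun x hx =>
          lt_of_le_of_lt (hls.trans hss.le) hx
        have hmeas' : MeasurableSet {x | s' < |f x|} := measurableSet_lt measurable_const hfa
        have h2 : δ ≤ ∫⁻ x in {x | l < |f x|},
            (ENNReal.ofReal |f x| ^ q - ENNReal.ofReal l ^ q) ∂μ := by
          calc δ = ∫⁻ _ in {x | s' < |f x|}, (ENNReal.ofReal s' ^ q - ENNReal.ofReal s ^ q) ∂μ := by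
                rw [setLIntegral_const]
            _ ≤ ∫⁻ x in {x | s' < |f x|},
                (ENNReal.ofReal |f x| ^ q - ENNReal.ofReal l ^ q) ∂μ := by
                refine setLIntegral_mono' hmeas' fun x hx => ?_
                refine tsub_le_tsub ?_ ?_
                · exact ENNReal.rpow_le_rpow (ENNReal.ofReal_le_ofReal (le_of_lt hx)) hq.le
                · exact ENNReal.rpow_le_rpow (ENNReal.ofReal_le_ofReal hls) hq.le
            _ ≤ _ := lintegral_mono_set h1
        have : δ < δ := by
          calc δ ≤ _ := h2
            _ ≤ _ := le_add_self
            _ < min δ _ := hsmall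
            _ ≤ δ := min_le_left _ _
        exact lt_irrefl _ this
      · -- then φ(s) ≤ φ(l) < ε ≤ φ(s)
        have h1 : {x | |f x| ≤ s} ⊆ {x | |f x| ≤ l} := fun x hx => le_trans hx hls.le
        have : (∫⁻ x in {x | |f x| ≤ s}, ENNReal.ofReal |f x| ^ q ∂μ)
            < ∫⁻ x in {x | |f x| ≤ s}, ENNReal.ofReal |f x| ^ q ∂μ := by
          calc (∫⁻ x in {x | |f x| ≤ s}, ENNReal.ofReal |f x| ^ q ∂μ)
              ≤ ∫⁻ x in {x | |f x| ≤ l}, ENNReal.ofReal |f x| ^ q ∂μ := lintegral_mono_set h1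
            _ ≤ _ := le_self_add
            _ < min δ _ := hsmall
            _ ≤ _ := min_le_right _ _
        exact lt_irrefl _ this
    -- Step E: the set where 0 < |f| and ofReal |f| < t is null
    have hnull : μ {x | 0 < |f x| ∧ ENNReal.ofReal |f x| < t} = 0 := by
      have hsub : {x | 0 < |f x| ∧ ENNReal.ofReal |f x| < t} ⊆
          ⋃ r : ℚ, {x | 0 < |f x| ∧ ENNReal.ofReal (r:ℝ) < t ∧ |f x| ≤ (r:ℝ)} := by
        rintro x ⟨hx1, hx2⟩
        obtain ⟨r, _, hr1, hr2⟩ := ENNReal.lt_iff_exists_rat_btwn.mp hx2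
        have hr1' : ENNReal.ofReal |f x| < ENNReal.ofReal (r:ℝ) := hr1
        have hr2' : ENNReal.ofReal (r:ℝ) < t := hr2
        have hfr : |f x| < (r:ℝ) := (ENNReal.ofReal_lt_ofReal_iff'.mp hr1').1
        refine Set.mem_iUnion.mpr ⟨r, hx1, hr2', hfr.le⟩
      refine measure_mono_null hsub (measure_iUnion_null fun r => ?_)
      by_cases hr : 0 < (r:ℝ) ∧ ENNReal.ofReal (r:ℝ) < t
      · have h0' := hφ (r:ℝ) hr.1 hr.2
        have hmeasset : MeasurableSet {x | |f x| ≤ (r:ℝ)} := measurableSet_le hfa measurable_const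
        have hptz := (setLIntegral_eq_zero_iff hmeasset hg).mp h0'
        refine measure_eq_zero_iff_ae_notMem.mpr ?_
        filter_upwards [hptz] with x hx
        rintro ⟨hx1, _, hx3⟩
        exact absurd (hgzero x (hx hx3)) (ne_of_gt hx1)
      · have hemp : {x | 0 < |f x| ∧ ENNReal.ofReal (r:ℝ) < t ∧ |f x| ≤ (r:ℝ)} = ∅ := by
          ext x
          simp only [Set.mem_setOf_eq, Set.mem_empty_iff_false, iff_false]
          rintro ⟨h1, h2, h3⟩
          exact hr ⟨lt_of_lt_of_le h1 h3, h2⟩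
        rw [hemp]
        exact measure_empty
    have hae1 : ∀ᵐ x ∂μ, ¬(0 < |f x| ∧ ENNReal.ofReal |f x| < t) :=
      measure_eq_zero_iff_ae_notMem.mp hnull
    have ht0 : t ≠ 0 := by
      intro h
      apply h0
      filter_upwards [hae2] with x hx
      rw [h, nonpos_iff_eq_zero] at hx
      exact le_antisymm (ENNReal.ofReal_eq_zero.mp hx) (abs_nonneg _)
    have httop : t ≠ ⊤ := by
      intro h
      apply h0
      filter_upwards [hae1] with x hx
      by_contra hfx
      exact hx ⟨(abs_nonneg _).lt_of_ne (Ne.symm hfx), by rw [h]; exact ENNReal.ofReal_lt_top⟩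
    refine ⟨t.toReal, {x | |f x| = t.toReal}, ENNReal.toReal_nonneg,
      hfa (measurableSet_singleton _), ?_⟩
    filter_upwards [hae1, hae2] with x hx1 hx2
    rcases eq_or_lt_of_le hx2 with heqt | hltt
    · have hfx : |f x| = t.toReal := by rw [← heqt, ENNReal.toReal_ofReal (abs_nonneg _)]
      have hmemS : x ∈ {y | |f y| = t.toReal} := hfx
      rw [Set.indicator_of_mem hmemS, mul_one]
      exact hfx
    · have hfx : |f x| = 0 := by
        by_contra hne
        exact hx1 ⟨(abs_nonneg _).lt_of_ne (Ne.symm hne), hltt⟩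
      have hxS : x ∉ {y | |f y| = t.toReal} := by
        simp only [Set.mem_setOf_eq, hfx]
        intro h
        exact ENNReal.toReal_ne_zero.mpr ⟨ht0, httop⟩ h.symm
      rw [Set.indicator_of_notMem hxS, mul_zero]
      exact hfx
  · rintro ⟨C, S, hC, hS, hae⟩
    have hIeq : I = ENNReal.ofReal C ^ q * μ S := by
      have haeq : (fun x => ENNReal.ofReal |f x| ^ q) =ᵐ[μ]
          S.indicator (fun _ => ENNReal.ofReal C ^ q) := by
        filter_upwards [hae] with x hx
        by_cases hxS : x ∈ S
        · rw [Set.indicator_of_mem hxS] at hx ⊢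
          rw [hx, mul_one]
        · rw [Set.indicator_of_notMem hxS] at hx ⊢
          rw [hx, mul_zero, ENNReal.ofReal_zero, ENNReal.zero_rpow_of_pos hq]
      rw [hI, lintegral_congr_ae haeq, lintegral_indicator hS, setLIntegral_const]
    by_cases hz : ENNReal.ofReal C ^ q * μ S = 0
    · have hf0 : ∀ᵐ x ∂μ, |f x| = 0 := by
        rcases mul_eq_zero.mp hz with h | h
        · have hC0 : C = 0 := by
            rcases ENNReal.rpow_eq_zero_iff.mp h with ⟨h1, _⟩ | ⟨h1, _⟩
            · exact le_antisymm (ENNReal.ofReal_eq_zero.mp h1) hC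
            · exact absurd h1 ENNReal.ofReal_ne_top
          filter_upwards [hae] with x hx
          rw [hx, hC0, zero_mul]
        · filter_upwards [hae, measure_eq_zero_iff_ae_notMem.mp h] with x hx hxS
          rw [hx, Set.indicator_of_notMem hxS, mul_zero]
      have hw : weakNorm μ q f = 0 := by
        rw [weakNorm]
        refine le_antisymm (iSup₂_le fun l hl => ?_) zero_le
        have hm0 : μ {x | l < |f x|} = 0 := by
          refine measure_eq_zero_iff_ae_notMem.mpr ?_
          filter_upwards [hf0] with x hx
          simp only [Set.mem_setOf_eq, not_lt, hx]
          exact hl.le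
        rw [hm0, ENNReal.zero_rpow_of_pos hq1, mul_zero]
      have hs' : strongNorm μ q f = 0 := by
        rw [hstrongdef, hIeq, hz, ENNReal.zero_rpow_of_pos hq1]
      rw [hw, hs']
    · have hC0 : ENNReal.ofReal C ≠ 0 := by
        intro h
        exact hz (by rw [h, ENNReal.zero_rpow_of_pos hq, zero_mul])
      have hCq0 : ENNReal.ofReal C ^ q ≠ 0 := by
        intro h
        exact hz (by rw [h, zero_mul])
      have hS0 : μ S ≠ 0 := fun h => hz (by rw [h, mul_zero])
      have hCpos : 0 < C := lt_of_not_ge fun h => hC0 (ENNReal.ofReal_eq_zero.mpr h)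
      have hSfin : μ S ≠ ⊤ := by
        intro h
        apply hItop
        rw [hIeq, h, ENNReal.mul_top hCq0]
      set A := μ S ^ (1/q) with hA
      have hA0 : A ≠ 0 := by
        rw [hA]
        intro h
        rcases ENNReal.rpow_eq_zero_iff.mp h with ⟨h1, _⟩ | ⟨_, h2⟩
        · exact hS0 h1
        · exact absurd h2 (not_lt.mpr hq1.le)
      have hAtop : A ≠ ⊤ := by
        rw [hA]
        exact ((ENNReal.rpow_lt_top_iff_of_pos hq1).mpr (lt_top_iff_ne_top.mpr hSfin)).ne
      have hstrong : strongNorm μ q f = ENNReal.ofReal C * A := by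
        rw [hstrongdef, hIeq, hA, ENNReal.mul_rpow_of_nonneg _ _ hq1.le,
          ← ENNReal.rpow_mul, mul_one_div_cancel hq.ne', ENNReal.rpow_one]
      have hmem : ∀ l : ℝ, 0 < l → l < C → μ {x | l < |f x|} = μ S := by
        intro l hl hlC
        apply measure_congr
        filter_upwards [hae] with x hx
        show (l < |f x|) = (x ∈ S)
        rw [eq_iff_iff]
        constructor
        · intro hlf
          by_contra hxS
          rw [hx, Set.indicator_of_notMem hxS, mul_zero] at hlf
          exact absurd hlf (not_lt.mpr hl.le)
        · intro hxS
          rw [hx, Set.indicator_of_mem hxS, mul_one]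
          exact hlC
      have hzero : ∀ l : ℝ, C ≤ l → μ {x | l < |f x|} = 0 := by
        intro l hCl
        refine measure_eq_zero_iff_ae_notMem.mpr ?_
        filter_upwards [hae] with x hx
        simp only [Set.mem_setOf_eq, not_lt]
        rw [hx]
        by_cases hxS : x ∈ S
        · rw [Set.indicator_of_mem hxS, mul_one]; exact hCl
        · rw [Set.indicator_of_notMem hxS, mul_zero]
          exact le_trans hCpos.le hCl
      have hweak : weakNorm μ q f = ENNReal.ofReal C * A := by
        rw [weakNorm]
        refine le_antisymm (iSup₂_le fun l hl => ?_) ?_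
        · rcases lt_or_ge l C with h | h
          · rw [hmem l hl h, ← hA]
            exact mul_le_mul_left (ENNReal.ofReal_le_ofReal h.le) _
          · rw [hzero l h, ENNReal.zero_rpow_of_pos hq1, mul_zero]
            exact zero_le
        · refine le_of_forall_lt_imp_le_of_dense fun c hc => ?_
          have hcA : c / A < ENNReal.ofReal C :=
            (ENNReal.div_lt_iff (Or.inl hA0) (Or.inl hAtop)).mpr hc
          have hctop : c / A ≠ ⊤ := (lt_of_lt_of_le hcA le_top).ne
          have h1 : (c / A).toReal < C := (ENNReal.lt_ofReal_iff_toReal_lt hctop).mp hcA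
          set l := ((c / A).toReal + C) / 2 with hldef
          have htR : (0:ℝ) ≤ (c / A).toReal := ENNReal.toReal_nonneg
          have hl0 : 0 < l := by rw [hldef]; linarith
          have hl1 : (c/A).toReal < l := by rw [hldef]; linarith
          have hl2 : l < C := by rw [hldef]; linarith
          calc c = c / A * A := (ENNReal.div_mul_cancel hA0 hAtop).symm
            _ ≤ ENNReal.ofReal l * A := by
                refine mul_le_mul_left ?_ _
                rw [← ENNReal.ofReal_toReal hctop]
                exact ENNReal.ofReal_le_ofReal hl1.le
            _ = ENNReal.ofReal l * μ {x | l < |f x|} ^ (1/q) := by rw [hmem l hl0 hl2, ← hA]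
            _ ≤ _ := le_iSup₂ (f := fun (l : ℝ) (_ : 0 < l) =>
                ENNReal.ofReal l * μ {x | l < |f x|} ^ (1/q)) l hl0
      rw [hweak, hstrong]
end
end

section
/- Let 0 < p1, p2 < ∞ and let n, m be positive integers. There exists a measurable function F on ℝ^n × ℝ^m with finite iterated weak norm but infinite mixed weak norm: ‖F‖_{L^{p2,∞}(L^{p1,∞})} < ∞ and ‖F‖_{L^{(p1,p2),∞}} = ∞ (one may take F(x,y) = |x|^{-n/p1}·|y|^{-m/p2}). Consequently L^{p2,∞}(L^{p1,∞})(ℝ^n×ℝ^m) is not contained in L^{(p1,p2),∞}(ℝ^n×ℝ^m). -/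
open MeasureTheory ENNReal Filter Topology Set

noncomputable section

/- ### Auxiliary lemmas -/

lemma euc_nontrivial (n : ℕ) (hn : 0 < n) : Nontrivial (Euc n) :=
  Module.nontrivial_of_finrank_pos (R := ℝ) (by rwa [finrank_euclideanSpace_fin])

/-- Measurability of `x ↦ ‖x‖ ^ c`. -/
lemma measurable_norm_rpow (n : ℕ) (c : ℝ) (hc : c ≠ 0) :
    Measurable (fun x : Euc n => ‖x‖ ^ c) := by
  classical
  have heq : (fun x : Euc n => ‖x‖ ^ c)
      = fun x => if x = 0 then 0 else Real.exp (Real.log ‖x‖ * c) := by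
    funext x
    by_cases hx : x = 0
    · simp [hx, Real.zero_rpow hc]
    · rw [if_neg hx, Real.rpow_def_of_pos (norm_pos_iff.mpr hx)]
  rw [heq]
  exact Measurable.ite measurableSet_eq measurable_const
    (Real.measurable_exp.comp ((Real.measurable_log.comp measurable_norm).mul_const c))

/-- Volume of the super-level set of `x ↦ ‖x‖ ^ (-(n/p))`. -/
lemma vol_levelset (n : ℕ) (hn : 0 < n) {p s : ℝ} (hp : 0 < p) (hs : 0 < s) :
    volume {x : Euc n | s < ‖x‖ ^ (-((n : ℝ) / p))} =
      ENNReal.ofReal (s ^ (-p)) * volume (Metric.ball (0 : Euc n) 1) := by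
  haveI : Nontrivial (Euc n) := euc_nontrivial n hn
  have hn' : (0 : ℝ) < n := by exact_mod_cast hn
  set c : ℝ := -((n : ℝ) / p) with hc
  have hcneg : c < 0 := neg_lt_zero.mpr (div_pos hn' hp)
  have hr : (0 : ℝ) < s ^ c⁻¹ := Real.rpow_pos_of_pos hs _
  have hset : {x : Euc n | s < ‖x‖ ^ c} = Metric.ball (0 : Euc n) (s ^ c⁻¹) \ {0} := by
    ext x
    simp only [mem_setOf_eq, mem_diff, Metric.mem_ball, dist_zero_right, mem_singleton_iff]
    constructor
    · intro h
      have hx0 : x ≠ 0 := by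
        rintro rfl
        rw [norm_zero, Real.zero_rpow hcneg.ne] at h
        exact absurd h (not_lt.mpr hs.le)
      exact ⟨(Real.lt_rpow_inv_iff_of_neg (norm_pos_iff.mpr hx0) hs hcneg).mpr h, hx0⟩
    · rintro ⟨h1, h2⟩
      exact (Real.lt_rpow_inv_iff_of_neg (norm_pos_iff.mpr h2) hs hcneg).mp h1
  rw [hset, measure_diff_null (measure_singleton _), Measure.addHaar_ball volume 0 hr.le,
    finrank_euclideanSpace_fin]
  congr 2
  rw [← Real.rpow_natCast (s ^ c⁻¹) n, ← Real.rpow_mul hs.le]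
  congr 1
  rw [hc]
  have hp' : p ≠ 0 := hp.ne'
  have hn'' : (n : ℝ) ≠ 0 := hn'.ne'
  field_simp

/-- Computation of the characteristic supremum. -/
lemma sup_formula (p c : ℝ) (hp : 0 < p) (hc : 0 < c) (B : ℝ≥0∞) :
    (⨆ (l : ℝ) (_ : 0 < l), ENNReal.ofReal l *
      (ENNReal.ofReal ((l / c) ^ (-p)) * B) ^ (1 / p)) = ENNReal.ofReal c * B ^ (1 / p) := by
  have key : ∀ l : ℝ, 0 < l → ENNReal.ofReal l *
      (ENNReal.ofReal ((l / c) ^ (-p)) * B) ^ (1 / p) = ENNReal.ofReal c * B ^ (1 / p) := by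
    intro l hl
    have hlc : 0 < l / c := div_pos hl hc
    rw [ENNReal.mul_rpow_of_nonneg _ _ (by positivity),
      ENNReal.ofReal_rpow_of_pos (Real.rpow_pos_of_pos hlc _), ← Real.rpow_mul hlc.le]
    have hexp : -p * (1 / p) = -1 := by field_simp
    rw [hexp, Real.rpow_neg_one, ← mul_assoc, ← ENNReal.ofReal_mul hl.le]
    congr 2
    field_simp
  apply le_antisymm
  · exact iSup₂_le fun l hl => (key l hl).le
  · exact le_iSup₂_of_le 1 one_pos (key 1 one_pos).ge

/-- The weak norm of `x ↦ ‖x‖^(-(n/p)) * c`. -/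
lemma weakNorm_formula (n : ℕ) (hn : 0 < n) {p : ℝ} (hp : 0 < p) (c : ℝ) (hc : 0 ≤ c) :
    weakNorm volume p (fun x : Euc n => ‖x‖ ^ (-((n : ℝ) / p)) * c)
      = ENNReal.ofReal c * volume (Metric.ball (0 : Euc n) 1) ^ (1 / p) := by
  rcases hc.eq_or_lt with hc0 | hc0
  · rw [← hc0, ENNReal.ofReal_zero, zero_mul]
    apply le_antisymm _ (zero_le)
    apply iSup₂_le
    intro l hl
    have : {x : Euc n | l < |‖x‖ ^ (-((n : ℝ) / p)) * 0|} = ∅ := by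
      ext x; simp [not_lt, hl.le]
    rw [this]
    simp only [measure_empty, ENNReal.zero_rpow_of_pos (by positivity : (0:ℝ) < 1 / p), mul_zero,
      le_refl]
  · rw [weakNorm]
    have hsets : ∀ l : ℝ, 0 < l →
        {x : Euc n | l < |‖x‖ ^ (-((n : ℝ) / p)) * c|} =
          {x : Euc n | l / c < ‖x‖ ^ (-((n : ℝ) / p))} := by
      intro l hl
      ext x
      rw [mem_setOf_eq, mem_setOf_eq,
        abs_of_nonneg (mul_nonneg (Real.rpow_nonneg (norm_nonneg _) _) hc)]
      exact Iff.symm (div_lt_iff₀ hc0)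
    calc (⨆ (l : ℝ) (_ : 0 < l), ENNReal.ofReal l *
            volume {x : Euc n | l < |‖x‖ ^ (-((n : ℝ) / p)) * c|} ^ (1 / p))
        = ⨆ (l : ℝ) (_ : 0 < l), ENNReal.ofReal l *
            (ENNReal.ofReal ((l / c) ^ (-p)) * volume (Metric.ball (0 : Euc n) 1)) ^ (1 / p) := by
          apply iSup_congr; intro l; apply iSup_congr; intro hl
          rw [hsets l hl, vol_levelset n hn hp (div_pos hl hc0)]
      _ = _ := sup_formula p c hp hc0 _

/-- Divergence of `∫ ‖y‖^(-m)` on `ℝ^m`. -/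
lemma lintegral_norm_neg_dim (m : ℕ) (hm : 0 < m) :
    ∫⁻ y : Euc m, ENNReal.ofReal (‖y‖ ^ (-(m : ℝ))) = ∞ := by
  haveI : Nontrivial (Euc m) := euc_nontrivial m hm
  set B := volume (Metric.ball (0 : Euc m) 1) with hB
  have hB0 : B ≠ 0 := (Metric.measure_ball_pos volume 0 one_pos).ne'
  have hBtop : B ≠ ⊤ := measure_ball_lt_top.ne
  set r : ℕ → ℝ := fun k => (2 : ℝ)⁻¹ ^ k with hr
  have hrpos : ∀ k, 0 < r k := fun k => pow_pos (by norm_num) k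
  have hrsucc : ∀ k, r (k + 1) = r k * 2⁻¹ := fun k => pow_succ _ _
  have hrlt : ∀ k, r (k + 1) < r k := by
    intro k
    rw [hrsucc]
    nlinarith [hrpos k]
  have hranti : ∀ j k : ℕ, j ≤ k → r k ≤ r j := fun j k h =>
    pow_le_pow_of_le_one (by norm_num) (by norm_num) h
  set A : ℕ → Set (Euc m) :=
    fun k => Metric.ball 0 (r k) \ Metric.closedBall 0 (r (k + 1)) with hA
  have hAmeas : ∀ k, MeasurableSet (A k) :=
    fun k => measurableSet_ball.diff measurableSet_closedBall
  have hAdisj : Pairwise (Function.onFun Disjoint A) := by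
    apply (pairwise_disjoint_on A).mpr
    intro j k hjk
    rw [Set.disjoint_left]
    rintro x ⟨_, hx2⟩ ⟨hx3, _⟩
    apply hx2
    rw [Metric.mem_closedBall, dist_zero_right]
    rw [Metric.mem_ball, dist_zero_right] at hx3
    exact hx3.le.trans (hranti (j + 1) k hjk)
  set f : Euc m → ℝ≥0∞ := fun y => ENNReal.ofReal (‖y‖ ^ (-(m : ℝ))) with hf
  have hfm : Measurable f :=
    (measurable_norm_rpow m (-(m : ℝ))
      (neg_ne_zero.mpr (Nat.cast_ne_zero.mpr hm.ne'))).ennreal_ofReal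
  have hvolA : ∀ k, volume (A k) = ENNReal.ofReal (r k ^ m - r (k + 1) ^ m) * B := by
    intro k
    rw [hA]
    rw [measure_diff (Metric.closedBall_subset_ball (hrlt k))
      measurableSet_closedBall.nullMeasurableSet measure_closedBall_lt_top.ne,
      Measure.addHaar_ball volume 0 (hrpos k).le,
      Measure.addHaar_closedBall volume 0 (hrpos (k + 1)).le, finrank_euclideanSpace_fin,
      ENNReal.ofReal_sub _ (by positivity), ENNReal.sub_mul (fun _ _ => hBtop)]
  have hconst : (0 : ℝ) < 1 - (2 : ℝ)⁻¹ ^ m := by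
    have : (2 : ℝ)⁻¹ ^ m < 1 := pow_lt_one₀ (by norm_num) (by norm_num) hm.ne'
    linarith
  have hbound : ∀ k, ENNReal.ofReal (1 - (2 : ℝ)⁻¹ ^ m) * B ≤ ∫⁻ y in A k, f y := by
    intro k
    have hrk : (0 : ℝ) < r k ^ m := pow_pos (hrpos k) m
    have hc : ENNReal.ofReal (1 - (2 : ℝ)⁻¹ ^ m) * B
        = ENNReal.ofReal ((r k ^ m)⁻¹) * volume (A k) := by
      rw [hvolA k, ← mul_assoc, ← ENNReal.ofReal_mul (by positivity)]
      congr 2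
      rw [hrsucc k, mul_pow]
      field_simp
    rw [hc]
    calc ENNReal.ofReal ((r k ^ m)⁻¹) * volume (A k)
        = ∫⁻ _ in A k, ENNReal.ofReal ((r k ^ m)⁻¹) := (setLIntegral_const _ _).symm
      _ ≤ ∫⁻ y in A k, f y := by
          apply setLIntegral_mono hfm
          intro y hy
          obtain ⟨hy1, hy2⟩ := hy
          rw [Metric.mem_ball, dist_zero_right] at hy1
          have hy0 : 0 < ‖y‖ := by
            rw [Metric.mem_closedBall, dist_zero_right, not_le] at hy2
            exact (hrpos (k + 1)).trans hy2
          apply ENNReal.ofReal_le_ofReal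
          rw [Real.rpow_neg (norm_nonneg y), Real.rpow_natCast]
          exact inv_anti₀ (pow_pos hy0 m) (pow_le_pow_left₀ hy0.le hy1.le m)
  have htop : (∑' _ : ℕ, ENNReal.ofReal (1 - (2 : ℝ)⁻¹ ^ m) * B) = ∞ :=
    ENNReal.tsum_const_eq_top_of_ne_zero
      (mul_ne_zero (ENNReal.ofReal_pos.mpr hconst).ne' hB0)
  refine top_le_iff.mp ?_
  calc (⊤ : ℝ≥0∞) = ∑' _ : ℕ, ENNReal.ofReal (1 - (2 : ℝ)⁻¹ ^ m) * B := htop.symm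
    _ ≤ ∑' k, ∫⁻ y in A k, f y := ENNReal.tsum_le_tsum hbound
    _ = ∫⁻ y in ⋃ k, A k, f y := (lintegral_iUnion hAmeas hAdisj f).symm
    _ ≤ ∫⁻ y, f y := setLIntegral_le_lintegral _ _

/-- For `0 < p1, p2 < ∞` and positive integers `n, m`, there is a measurable
function `F` on `ℝ^n × ℝ^m` with finite iterated weak norm but infinite mixed weak norm;
hence `L^{p2,∞}(L^{p1,∞}) ⊄ L^{(p1,p2),∞}`. -/
theorem stmt1 (n m : ℕ) (hn : 0 < n) (hm : 0 < m) (p1 p2 : ℝ)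
    (hp1 : 0 < p1) (hp2 : 0 < p2) :
    ∃ F : Euc n × Euc m → ℝ, Measurable F ∧
      iteratedWeakNorm p1 p2 F < ⊤ ∧ mixedWeakNorm p1 p2 F = ⊤ := by
  haveI : Nontrivial (Euc n) := euc_nontrivial n hn
  haveI : Nontrivial (Euc m) := euc_nontrivial m hm
  have hn' : (0 : ℝ) < n := by exact_mod_cast hn
  have hm' : (0 : ℝ) < m := by exact_mod_cast hm
  set F : Euc n × Euc m → ℝ :=
    fun z => ‖z.1‖ ^ (-((n : ℝ) / p1)) * ‖z.2‖ ^ (-((m : ℝ) / p2)) with hF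
  have haneg : -((n : ℝ) / p1) ≠ 0 := by
    have := div_pos hn' hp1; intro h; rw [neg_eq_zero] at h; linarith
  have hbneg : -((m : ℝ) / p2) ≠ 0 := by
    have := div_pos hm' hp2; intro h; rw [neg_eq_zero] at h; linarith
  have hFm : Measurable F := by
    exact ((measurable_norm_rpow n _ haneg).comp measurable_fst).mul
      ((measurable_norm_rpow m _ hbneg).comp measurable_snd)
  refine ⟨F, hFm, ?_, ?_⟩
  -- finiteness / infiniteness
  · -- iterated weak norm is finite
    set Bn := volume (Metric.ball (0 : Euc n) 1) with hBn
    set Bm := volume (Metric.ball (0 : Euc m) 1) with hBm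
    have hBn0 : Bn ≠ 0 := (Metric.measure_ball_pos volume 0 one_pos).ne'
    have hBntop : Bn ≠ ⊤ := measure_ball_lt_top.ne
    set K : ℝ≥0∞ := Bn ^ (1 / p1) with hK
    have hKtop : K ≠ ⊤ := ENNReal.rpow_ne_top_of_nonneg (by positivity) hBntop
    have hK0 : K ≠ 0 := (ENNReal.rpow_pos (pos_iff_ne_zero.mpr hBn0) hBntop).ne'
    set k : ℝ := K.toReal with hk
    have hkpos : 0 < k := ENNReal.toReal_pos hK0 hKtop
    have hKk : ENNReal.ofReal k = K := ENNReal.ofReal_toReal hKtop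
    have hW : ∀ y : Euc m, (weakNorm volume p1 fun x => F (x, y))
        = ENNReal.ofReal (‖y‖ ^ (-((m : ℝ) / p2)) * k) := by
      intro y
      have : (fun x : Euc n => F (x, y))
          = fun x : Euc n => ‖x‖ ^ (-((n : ℝ) / p1)) * (‖y‖ ^ (-((m : ℝ) / p2))) := rfl
      rw [this, weakNorm_formula n hn hp1 _ (Real.rpow_nonneg (norm_nonneg y) _),
        ENNReal.ofReal_mul (Real.rpow_nonneg (norm_nonneg y) _), hKk]
    have hiter : iteratedWeakNorm p1 p2 F = ENNReal.ofReal k * Bm ^ (1 / p2) := by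
      rw [iteratedWeakNorm]
      have hsets : ∀ l : ℝ, 0 < l →
          {y : Euc m | ENNReal.ofReal l < weakNorm volume p1 fun x => F (x, y)}
            = {y : Euc m | l / k < ‖y‖ ^ (-((m : ℝ) / p2))} := by
        intro l hl
        ext y
        rw [mem_setOf_eq, mem_setOf_eq, hW y,
          ENNReal.ofReal_lt_ofReal_iff_of_nonneg hl.le]
        exact Iff.symm (div_lt_iff₀ hkpos)
      calc (⨆ (l : ℝ) (_ : 0 < l), ENNReal.ofReal l *
              volume {y : Euc m | ENNReal.ofReal l <
                weakNorm volume p1 fun x => F (x, y)} ^ (1 / p2))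
          = ⨆ (l : ℝ) (_ : 0 < l), ENNReal.ofReal l *
              (ENNReal.ofReal ((l / k) ^ (-p2)) * Bm) ^ (1 / p2) := by
            apply iSup_congr; intro l; apply iSup_congr; intro hl
            rw [hsets l hl, vol_levelset m hm hp2 (div_pos hl hkpos)]
        _ = _ := sup_formula p2 k hp2 hkpos _
    rw [hiter]
    exact ENNReal.mul_lt_top ENNReal.ofReal_lt_top
      (ENNReal.rpow_lt_top_of_nonneg (by positivity) measure_ball_lt_top.ne)
  · -- mixed weak norm is infinite
    set Bn := volume (Metric.ball (0 : Euc n) 1) with hBn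
    have hBn0 : Bn ≠ 0 := (Metric.measure_ball_pos volume 0 one_pos).ne'
    have hBntop : Bn ≠ ⊤ := measure_ball_lt_top.ne
    set E : Set (Euc n × Euc m) := {z | 1 < |F z|} with hE
    have hEmeas : MeasurableSet E := measurableSet_lt measurable_const hFm.abs
    have hmix : mixedNorm p1 p2 (E.indicator fun _ => (1 : ℝ)) = ⊤ := by
      rw [mixedNorm]
      have hptw : ∀ z : Euc n × Euc m,
          ENNReal.ofReal |E.indicator (fun _ => (1 : ℝ)) z| ^ p1
            = E.indicator (fun _ => (1 : ℝ≥0∞)) z := by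
        intro z
        by_cases hz : z ∈ E
        · simp [indicator_of_mem hz]
        · simp [indicator_of_notMem hz, ENNReal.zero_rpow_of_pos hp1]
      have hinner : ∀ y : Euc m,
          (∫⁻ x : Euc n, ENNReal.ofReal |E.indicator (fun _ => (1 : ℝ)) (x, y)| ^ p1)
            = volume {x : Euc n | (x, y) ∈ E} := by
        intro y
        have hmeas : MeasurableSet {x : Euc n | (x, y) ∈ E} :=
          hEmeas.preimage measurable_prodMk_right
        have heq : ∀ x : Euc n, ENNReal.ofReal |E.indicator (fun _ => (1 : ℝ)) (x, y)| ^ p1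
            = {x : Euc n | (x, y) ∈ E}.indicator (fun _ => (1 : ℝ≥0∞)) x := by
          intro x
          by_cases h : (x, y) ∈ E
          · rw [indicator_of_mem h, indicator_of_mem (show x ∈ {x : Euc n | (x, y) ∈ E} from h)]
            simp
          · rw [indicator_of_notMem h,
              indicator_of_notMem (show x ∉ {x : Euc n | (x, y) ∈ E} from h)]
            simp [ENNReal.zero_rpow_of_pos hp1]
        simp_rw [heq]
        exact lintegral_indicator_one hmeas
      have key : ∀ y : Euc m, y ≠ 0 →
          (∫⁻ x : Euc n, ENNReal.ofReal |E.indicator (fun _ => (1 : ℝ)) (x, y)| ^ p1)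
              ^ (p2 / p1)
            = ENNReal.ofReal (‖y‖ ^ (-(m : ℝ))) * Bn ^ (p2 / p1) := by
        intro y hy
        set c : ℝ := ‖y‖ ^ (-((m : ℝ) / p2)) with hc
        have hcpos : 0 < c := Real.rpow_pos_of_pos (norm_pos_iff.mpr hy) _
        have hslice : {x : Euc n | (x, y) ∈ E}
            = {x : Euc n | 1 / c < ‖x‖ ^ (-((n : ℝ) / p1))} := by
          ext x
          show (1:ℝ) < |‖x‖ ^ (-((n : ℝ) / p1)) * c| ↔ 1 / c < ‖x‖ ^ (-((n : ℝ) / p1))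
          rw [abs_of_nonneg (mul_nonneg (Real.rpow_nonneg (norm_nonneg _) _) hcpos.le)]
          exact Iff.symm (div_lt_iff₀ hcpos)
        rw [hinner y, hslice, vol_levelset n hn hp1 (by positivity),
          ENNReal.mul_rpow_of_nonneg _ _ (by positivity),
          ENNReal.ofReal_rpow_of_pos (Real.rpow_pos_of_pos (by positivity) _)]
        congr 2
        have h1 : (c⁻¹ : ℝ) ^ (-p1) = c ^ p1 := by
          rw [Real.inv_rpow hcpos.le, Real.rpow_neg hcpos.le, inv_inv]
        rw [one_div, h1, ← Real.rpow_mul hcpos.le]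
        have h2 : p1 * (p2 / p1) = p2 := by field_simp
        rw [h2, hc, ← Real.rpow_mul (norm_nonneg y)]
        congr 1
        rw [neg_mul, div_mul_cancel₀ _ hp2.ne']
      have hae : (fun y : Euc m =>
          (∫⁻ x : Euc n, ENNReal.ofReal |E.indicator (fun _ => (1 : ℝ)) (x, y)| ^ p1)
            ^ (p2 / p1))
          =ᵐ[volume] fun y => ENNReal.ofReal (‖y‖ ^ (-(m : ℝ))) * Bn ^ (p2 / p1) := by
        filter_upwards [compl_mem_ae_iff.mpr (measure_singleton (0 : Euc m))] with y hy
        exact key y (by simpa using hy)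
      rw [lintegral_congr_ae hae,
        lintegral_mul_const' _ _ (ENNReal.rpow_ne_top_of_nonneg (by positivity) hBntop),
        lintegral_norm_neg_dim m hm,
        ENNReal.top_mul ((ENNReal.rpow_pos (pos_iff_ne_zero.mpr hBn0) hBntop).ne'),
        ENNReal.top_rpow_of_pos (by positivity)]
    apply eq_top_iff.mpr
    refine le_trans ?_ (le_iSup₂_of_le 1 one_pos le_rfl)
    rw [hmix, ENNReal.mul_top (by simp)]
end
end

section
/- Let 0 < p1, p2 < ∞ and let n, m be positive integers. There exists a measurable function G on ℝ^n × ℝ^m with finite mixed weak norm but infinite iterated weak norm: ‖G‖_{L^{(p1,p2),∞}} < ∞ and ‖G‖_{L^{p2,∞}(L^{p1,∞})} = ∞ (one may take G(x,y) = a^{|y|^m}·χ_{[0, a^{-p1|y|^m/n}]}(|x|) for any constant a > 1). Consequently L^{(p1,p2),∞}(ℝ^n×ℝ^m) is not contained in L^{p2,∞}(L^{p1,∞})(ℝ^n×ℝ^m). -/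
open MeasureTheory ENNReal Filter Topology Set

noncomputable section

section Aux

open Metric

variable {n m : ℕ}

/-- The "floor of `‖y‖^m`" index function. -/
private def kfn (m : ℕ) (y : Euc m) : ℕ := ⌊‖y‖ ^ m⌋₊

/-- The radius used in the `j`-th layer. -/
private def rad (n : ℕ) (p1 : ℝ) (j : ℕ) : ℝ := (2 : ℝ) ^ (-(p1 * j) / n)

/-- The counterexample function. -/
private def Gfn (n m : ℕ) (p1 : ℝ) (z : Euc n × Euc m) : ℝ :=
  if ‖z.1‖ ≤ rad n p1 (kfn m z.2) then 2 ^ kfn m z.2 else 0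

private lemma rad_pos (p1 : ℝ) (j : ℕ) : 0 < rad n p1 j :=
  Real.rpow_pos_of_pos two_pos _

private lemma rad_pow (hn : n ≠ 0) (p1 : ℝ) (j : ℕ) :
    (rad n p1 j) ^ n = (2 : ℝ) ^ (-(p1 * j)) := by
  rw [rad, ← Real.rpow_natCast ((2:ℝ) ^ (-(p1 * j) / n)) n, ← Real.rpow_mul (by norm_num),
    div_mul_cancel₀]
  exact_mod_cast hn

private lemma measurable_kfn : Measurable (kfn m) :=
  (measurable_norm.pow_const m).nat_floor

private lemma measurable_Gfn (p1 : ℝ) : Measurable (Gfn n m p1) := by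
  have h1 : Measurable fun z : Euc n × Euc m => kfn m z.2 :=
    measurable_kfn.comp measurable_snd
  exact Measurable.ite
    (measurableSet_le measurable_fst.norm
      ((measurable_from_nat (f := fun j => rad n p1 j)).comp h1))
    ((measurable_from_nat (f := fun j => ((2 : ℝ) ^ j))).comp h1) measurable_const

private lemma vol_closedBall (hn : n ≠ 0) (p1 : ℝ) (j : ℕ) :
    volume (closedBall (0 : Euc n) (rad n p1 j)) =
      ENNReal.ofReal ((2 : ℝ) ^ (-(p1 * j))) * volume (ball (0 : Euc n) 1) := by
  rw [MeasureTheory.Measure.addHaar_closedBall _ _ (rad_pos p1 j).le,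
    finrank_euclideanSpace_fin, rad_pow hn]

private lemma slice_eq (p1 : ℝ) {l : ℝ} (hl : 0 < l) (y : Euc m) :
    {x : Euc n | l < |Gfn n m p1 (x, y)|} =
      if l < 2 ^ kfn m y then closedBall 0 (rad n p1 (kfn m y)) else ∅ := by
  ext x
  simp only [Set.mem_setOf_eq, Gfn]
  by_cases hx : ‖x‖ ≤ rad n p1 (kfn m y)
  · rw [if_pos hx, abs_of_pos (pow_pos two_pos _)]
    by_cases hc : l < 2 ^ kfn m y
    · simp [hc, hx, mem_closedBall, dist_zero_right]
    · simp [hc]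
  · rw [if_neg hx, abs_zero]
    by_cases hc : l < 2 ^ kfn m y <;>
      simp [hc, not_lt_of_gt hl, mem_closedBall, dist_zero_right, hx]

/-- Key computation: integrating a function of `kfn` over `ℝ^m`. -/
private lemma lintegral_kfn (hm : m ≠ 0) (F : ℕ → ℝ≥0∞) :
    ∫⁻ y : Euc m, F (kfn m y) = ∑' j : ℕ, F j * volume (ball (0 : Euc m) 1) := by
  set A : ℕ → Set (Euc m) := fun j => kfn m ⁻¹' {j} with hA
  have hAmeas : ∀ j, MeasurableSet (A j) := fun j =>
    measurable_kfn (measurableSet_singleton j)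
  have hAdis : Pairwise (Function.onFun Disjoint A) := fun i j hij =>
    Set.disjoint_left.2 fun y hi hj => hij (by
      simp only [hA, Set.mem_preimage, Set.mem_singleton_iff] at hi hj
      rw [← hi, ← hj])
  have hAun : (⋃ j, A j) = Set.univ :=
    Set.eq_univ_of_forall fun y => Set.mem_iUnion.2 ⟨kfn m y, rfl⟩
  have hAball : ∀ j : ℕ, A j =
      ball 0 (((j : ℝ) + 1) ^ ((m : ℝ)⁻¹)) \ ball 0 ((j : ℝ) ^ ((m : ℝ)⁻¹)) := by
    intro j
    ext y
    have h1 : ((((j : ℝ) + 1) ^ ((m : ℝ)⁻¹)) : ℝ) ^ m = (j : ℝ) + 1 :=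
      Real.rpow_inv_natCast_pow (by positivity) hm
    have h2 : (((j : ℝ) ^ ((m : ℝ)⁻¹)) : ℝ) ^ m = (j : ℝ) :=
      Real.rpow_inv_natCast_pow (by positivity) hm
    simp only [hA, Set.mem_preimage, Set.mem_singleton_iff, Set.mem_diff,
      mem_ball, dist_zero_right, not_lt, kfn]
    rw [Nat.floor_eq_iff (by positivity)]
    constructor
    · rintro ⟨hle, hlt⟩
      constructor
      · rw [← pow_lt_pow_iff_left₀ (norm_nonneg y) (by positivity) hm, h1]
        exact_mod_cast hlt
      · rw [← pow_le_pow_iff_left₀ (by positivity) (norm_nonneg y) hm, h2]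
        exact_mod_cast hle
    · rintro ⟨hlt, hle⟩
      constructor
      · rw [← pow_le_pow_iff_left₀ (by positivity) (norm_nonneg y) hm, h2] at hle
        exact_mod_cast hle
      · rw [← pow_lt_pow_iff_left₀ (norm_nonneg y) (by positivity) hm, h1] at hlt
        exact_mod_cast hlt
  have hnontriv : Nontrivial (Euc m) := by
    have : Inhabited (Fin m) := ⟨⟨0, Nat.pos_of_ne_zero hm⟩⟩
    exact inferInstance
  have hvolA : ∀ j : ℕ, volume (A j) = volume (ball (0 : Euc m) 1) := by
    intro j
    rw [hAball j]
    have hsub : ball (0 : Euc m) ((j : ℝ) ^ ((m : ℝ)⁻¹)) ⊆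
        ball 0 (((j : ℝ) + 1) ^ ((m : ℝ)⁻¹)) :=
      ball_subset_ball (Real.rpow_le_rpow (by positivity) (by linarith) (by positivity))
    have hb1 : volume (ball (0 : Euc m) (((j : ℝ) + 1) ^ ((m : ℝ)⁻¹))) =
        ENNReal.ofReal ((j : ℝ) + 1) * volume (ball (0 : Euc m) 1) := by
      rw [MeasureTheory.Measure.addHaar_ball _ _
          (Real.rpow_nonneg (by positivity) _),
        finrank_euclideanSpace_fin, Real.rpow_inv_natCast_pow (by positivity) hm]
    have hb2 : volume (ball (0 : Euc m) ((j : ℝ) ^ ((m : ℝ)⁻¹))) =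
        ENNReal.ofReal (j : ℝ) * volume (ball (0 : Euc m) 1) := by
      rw [MeasureTheory.Measure.addHaar_ball _ _
          (Real.rpow_nonneg (by positivity) _),
        finrank_euclideanSpace_fin, Real.rpow_inv_natCast_pow (by positivity) hm]
    rw [measure_diff hsub measurableSet_ball.nullMeasurableSet measure_ball_lt_top.ne,
      hb1, hb2]
    have : ENNReal.ofReal ((j : ℝ) + 1) = ENNReal.ofReal (j : ℝ) + 1 := by
      rw [ENNReal.ofReal_add (by positivity) zero_le_one, ENNReal.ofReal_one]
    rw [this, add_mul, one_mul]
    exact ENNReal.add_sub_cancel_left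
      (ENNReal.mul_ne_top ENNReal.ofReal_ne_top measure_ball_lt_top.ne)
  calc ∫⁻ y : Euc m, F (kfn m y)
      = ∫⁻ y in ⋃ j, A j, F (kfn m y) := by rw [hAun, setLIntegral_univ]
    _ = ∑' j : ℕ, ∫⁻ y in A j, F (kfn m y) := lintegral_iUnion hAmeas hAdis _
    _ = ∑' j : ℕ, F j * volume (ball (0 : Euc m) 1) := by
        refine tsum_congr fun j => ?_
        rw [setLIntegral_congr_fun (hAmeas j)
          (fun y hy => by
            simp only [hA, Set.mem_preimage, Set.mem_singleton_iff] at hy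
            rw [hy]),
          setLIntegral_const, hvolA j]

/-- Lower bound for the weak norm of every slice. -/
private lemma weak_lb (hn : n ≠ 0) {p1 : ℝ} (hp1 : 0 < p1) (y : Euc m) :
    ENNReal.ofReal 2⁻¹ * volume (ball (0 : Euc n) 1) ^ (1 / p1) ≤
      weakNorm volume p1 (fun x => Gfn n m p1 (x, y)) := by
  set k := kfn m y
  set l : ℝ := 2 ^ k / 2 with hldef
  have hl : 0 < l := by positivity
  have hterm : ENNReal.ofReal l *
      volume {x : Euc n | l < |Gfn n m p1 (x, y)|} ^ (1 / p1) =
      ENNReal.ofReal 2⁻¹ * volume (ball (0 : Euc n) 1) ^ (1 / p1) := by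
    rw [slice_eq p1 hl y, if_pos (by
      rw [hldef]
      exact half_lt_self (by positivity)), vol_closedBall hn p1 k,
      ENNReal.mul_rpow_of_nonneg _ _ (by positivity),
      ENNReal.ofReal_rpow_of_pos (by positivity), ← mul_assoc,
      ← ENNReal.ofReal_mul hl.le]
    congr 2
    rw [show ((2 : ℝ) ^ (-(p1 * (k : ℝ)))) ^ (1 / p1) = (2 : ℝ) ^ (-(k : ℝ)) from by
        rw [← Real.rpow_mul (by norm_num)]
        congr 1
        field_simp,
      hldef]
    have h2k : (0 : ℝ) < (2 : ℝ) ^ (-(k : ℝ)) := Real.rpow_pos_of_pos two_pos _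
    rw [← Real.rpow_natCast (2 : ℝ) k, div_mul_eq_mul_div,
      ← Real.rpow_add (by norm_num)]
    norm_num
  calc ENNReal.ofReal 2⁻¹ * volume (ball (0 : Euc n) 1) ^ (1 / p1)
      = ENNReal.ofReal l * volume {x : Euc n | l < |Gfn n m p1 (x, y)|} ^ (1 / p1) :=
        hterm.symm
    _ ≤ weakNorm volume p1 (fun x => Gfn n m p1 (x, y)) := by
        apply le_iSup₂_of_le l hl
        exact le_rfl

end Aux

/-- For `0 < p1, p2 < ∞` and positive integers `n, m`, there is a measurable
function `G` on `ℝ^n × ℝ^m` with finite mixed weak norm but infinite iterated weak norm;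
hence `L^{(p1,p2),∞} ⊄ L^{p2,∞}(L^{p1,∞})`. -/
theorem stmt2 (n m : ℕ) (hn : 0 < n) (hm : 0 < m) (p1 p2 : ℝ)
    (hp1 : 0 < p1) (hp2 : 0 < p2) :
    ∃ G : Euc n × Euc m → ℝ, Measurable G ∧
      mixedWeakNorm p1 p2 G < ⊤ ∧ iteratedWeakNorm p1 p2 G = ⊤ := by
  classical
  have hn' : n ≠ 0 := hn.ne'
  have hm' : m ≠ 0 := hm.ne'
  refine ⟨Gfn n m p1, measurable_Gfn p1, ?_, ?_⟩
  · -- mixed weak norm is finite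
    set V := volume (Metric.ball (0 : Euc n) 1) with hV
    set W := volume (Metric.ball (0 : Euc m) 1) with hW
    have hVtop : V ≠ ⊤ := measure_ball_lt_top.ne
    have hWtop : W ≠ ⊤ := measure_ball_lt_top.ne
    set q : ℝ≥0∞ := ENNReal.ofReal ((2 : ℝ) ^ (-p2)) with hq
    have hq1 : q < 1 := by
      rw [hq, ← ENNReal.ofReal_one]
      exact (ENNReal.ofReal_lt_ofReal_iff one_pos).2
        (Real.rpow_lt_one_of_one_lt_of_neg one_lt_two (by linarith))
    have h1q : (1 : ℝ≥0∞) - q ≠ 0 := by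
      simp only [ne_eq, tsub_eq_zero_iff_le, not_le]
      exact hq1
    set c : ℝ≥0∞ := V ^ (p2 / p1) * W with hc
    have hctop : c ≠ ⊤ :=
      ENNReal.mul_ne_top (ENNReal.rpow_ne_top_of_nonneg (by positivity) hVtop) hWtop
    set C : ℝ≥0∞ := ((1 - q)⁻¹ * c) ^ (1 / p2) with hC
    have hCtop : C < ⊤ :=
      ENNReal.rpow_lt_top_of_nonneg (by positivity)
        (ENNReal.mul_ne_top (ENNReal.inv_ne_top.2 h1q) hctop)
    refine lt_of_le_of_lt ?_ hCtop
    rw [mixedWeakNorm]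
    refine iSup₂_le fun l hl => ?_
    obtain hex := pow_unbounded_of_one_lt (y := (2:ℝ)) l one_lt_two
    set K := Nat.find hex with hKdef
    have hK : l < 2 ^ K := Nat.find_spec hex
    have hmin : ∀ j : ℕ, l < 2 ^ j → K ≤ j := fun j hj => Nat.find_min' hex hj
    -- inner integral
    have hinner : ∀ y : Euc m,
        (∫⁻ x : Euc n, ENNReal.ofReal
          |({z : Euc n × Euc m | l < |Gfn n m p1 z|}.indicator (fun _ => (1:ℝ))) (x, y)| ^ p1)
        = if l < 2 ^ kfn m y then
            ENNReal.ofReal ((2 : ℝ) ^ (-(p1 * (kfn m y : ℝ)))) * V else 0 := by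
      intro y
      have hpt : (fun x : Euc n => ENNReal.ofReal
          |({z : Euc n × Euc m | l < |Gfn n m p1 z|}.indicator (fun _ => (1:ℝ))) (x, y)| ^ p1)
          = ({x : Euc n | l < |Gfn n m p1 (x, y)|}).indicator (fun _ => (1:ℝ≥0∞)) := by
        funext x
        by_cases hx : l < |Gfn n m p1 (x, y)|
        · rw [Set.indicator_of_mem (by exact hx), Set.indicator_of_mem (by exact hx)]
          simp
        · rw [Set.indicator_of_notMem (by exact hx), Set.indicator_of_notMem (by exact hx)]
          simp [ENNReal.zero_rpow_of_pos hp1]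
      rw [hpt, slice_eq p1 hl y]
      by_cases hcond : l < 2 ^ kfn m y
      · rw [if_pos hcond, if_pos hcond,
          lintegral_indicator measurableSet_closedBall, setLIntegral_one,
          vol_closedBall hn' p1 (kfn m y)]
      · rw [if_neg hcond, if_neg hcond]
        simp
    have hqpow : ∀ j : ℕ, q ^ j = ENNReal.ofReal ((2:ℝ) ^ (-p2 * (j:ℝ))) := fun j => by
      rw [hq, ← ENNReal.ofReal_pow (by positivity),
        ← Real.rpow_natCast ((2:ℝ) ^ (-p2)) j, ← Real.rpow_mul (by norm_num)]
    -- the function of the layer index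
    set F : ℕ → ℝ≥0∞ := fun j => if l < 2 ^ j then q ^ j * V ^ (p2 / p1) else 0 with hF
    have houter : ∀ y : Euc m,
        (if l < 2 ^ kfn m y then
            ENNReal.ofReal ((2 : ℝ) ^ (-(p1 * (kfn m y : ℝ)))) * V else 0) ^ (p2 / p1)
        = F (kfn m y) := by
      intro y
      set j := kfn m y
      by_cases hcond : l < 2 ^ j
      · rw [if_pos hcond, hF]
        simp only [if_pos hcond]
        rw [ENNReal.mul_rpow_of_nonneg _ _ (by positivity),
          ENNReal.ofReal_rpow_of_pos (by positivity),
          ← Real.rpow_mul (by norm_num),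
          show -(p1 * (j:ℝ)) * (p2 / p1) = -p2 * (j:ℝ) from by
            field_simp,
          ← hqpow j]
      · rw [if_neg hcond, hF]
        simp only [if_neg hcond]
        exact ENNReal.zero_rpow_of_pos (by positivity)
    have hsum : (∑' j : ℕ, F j * W) ≤ q ^ K * ((1 - q)⁻¹ * c) := by
      have hle : (∑' j : ℕ, F j * W) ≤
          ∑' j : ℕ, (if K ≤ j then q ^ j * V ^ (p2 / p1) * W else 0) := by
        refine ENNReal.tsum_le_tsum fun j => ?_
        by_cases hcond : l < 2 ^ j
        · rw [hF]
          simp only [if_pos hcond, if_pos (hmin j hcond)]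
          exact le_rfl
        · rw [hF]
          simp only [if_neg hcond, zero_mul]
          exact zero_le
      have heq : (∑' j : ℕ, (if K ≤ j then q ^ j * V ^ (p2 / p1) * W else 0))
          = ∑' i : ℕ, q ^ (K + i) * V ^ (p2 / p1) * W := by
        refine (Function.Injective.tsum_eq (add_right_injective K) ?_).symm.trans ?_
        · intro j hj
          simp only [Function.mem_support, ne_eq] at hj
          by_cases hcond : K ≤ j
          · obtain ⟨d, rfl⟩ := Nat.le.dest hcond
            exact ⟨d, rfl⟩
          · exact absurd (if_neg hcond) hj
        · refine tsum_congr fun i => ?_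
          rw [if_pos (Nat.le_add_right K i)]
      calc (∑' j : ℕ, F j * W) ≤ _ := hle
        _ = ∑' i : ℕ, q ^ (K + i) * V ^ (p2 / p1) * W := heq
        _ = ∑' i : ℕ, (q ^ K * (V ^ (p2 / p1) * W)) * q ^ i := by
            refine tsum_congr fun i => ?_
            rw [pow_add]
            ring
        _ = (q ^ K * (V ^ (p2 / p1) * W)) * ∑' i : ℕ, q ^ i := ENNReal.tsum_mul_left
        _ = q ^ K * ((1 - q)⁻¹ * c) := by
            rw [ENNReal.tsum_geometric, hc]
            ring
    have hmixed : mixedNorm p1 p2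
        ({z : Euc n × Euc m | l < |Gfn n m p1 z|}.indicator (fun _ => (1:ℝ)))
        ≤ (q ^ K) ^ (1 / p2) * C := by
      rw [mixedNorm, hC, ← ENNReal.mul_rpow_of_nonneg _ _ (by positivity)]
      refine ENNReal.rpow_le_rpow ?_ (by positivity)
      calc (∫⁻ y : Euc m, (∫⁻ x : Euc n, ENNReal.ofReal
              |({z : Euc n × Euc m | l < |Gfn n m p1 z|}.indicator
                (fun _ => (1:ℝ))) (x, y)| ^ p1) ^ (p2 / p1))
          = ∫⁻ y : Euc m, F (kfn m y) := by
            refine lintegral_congr fun y => ?_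
            rw [hinner y, houter y]
        _ = ∑' j : ℕ, F j * W := lintegral_kfn hm' F
        _ ≤ q ^ K * ((1 - q)⁻¹ * c) := hsum
    have hqK : (q ^ K) ^ (1 / p2) = ENNReal.ofReal ((2 : ℝ) ^ (-(K : ℝ))) := by
      rw [hqpow K, ENNReal.ofReal_rpow_of_pos (by positivity),
        ← Real.rpow_mul (by norm_num),
        show -p2 * (K : ℝ) * (1 / p2) = -(K : ℝ) from by
          field_simp]
    calc ENNReal.ofReal l * mixedNorm p1 p2
          ({z : Euc n × Euc m | l < |Gfn n m p1 z|}.indicator (fun _ => (1:ℝ)))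
        ≤ ENNReal.ofReal l * ((q ^ K) ^ (1 / p2) * C) := by
          exact mul_le_mul_right hmixed _
      _ = (ENNReal.ofReal l * ENNReal.ofReal ((2 : ℝ) ^ (-(K : ℝ)))) * C := by
          rw [hqK, mul_assoc]
      _ ≤ (ENNReal.ofReal ((2:ℝ) ^ K) * ENNReal.ofReal ((2 : ℝ) ^ (-(K : ℝ)))) * C := by
          gcongr
      _ = C := by
          rw [← ENNReal.ofReal_mul (by positivity), ← Real.rpow_natCast (2:ℝ) K,
            ← Real.rpow_add (by norm_num)]
          simp
  · -- iterated weak norm is infinite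
    set V := volume (Metric.ball (0 : Euc n) 1) with hV
    have hV0 : V ≠ 0 := (Metric.measure_ball_pos volume (0 : Euc n) one_pos).ne'
    have hVtop : V ≠ ⊤ := measure_ball_lt_top.ne
    set δ : ℝ≥0∞ := ENNReal.ofReal 2⁻¹ * V ^ (1 / p1) with hδ
    have hδ0 : δ ≠ 0 := by
      refine mul_ne_zero (by simp) ?_
      exact (ENNReal.rpow_pos (pos_iff_ne_zero.2 hV0) hVtop).ne'
    have hδtop : δ ≠ ⊤ :=
      ENNReal.mul_ne_top ENNReal.ofReal_ne_top
        (ENNReal.rpow_ne_top_of_nonneg (by positivity) hVtop)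
    set l0 : ℝ := δ.toReal / 2 with hl0
    have htr : 0 < δ.toReal := ENNReal.toReal_pos hδ0 hδtop
    have hl0pos : 0 < l0 := by rw [hl0]; positivity
    have hlt : ENNReal.ofReal l0 < δ := by
      calc ENNReal.ofReal l0 < ENNReal.ofReal δ.toReal :=
            (ENNReal.ofReal_lt_ofReal_iff htr).2 (by rw [hl0]; linarith)
        _ = δ := ENNReal.ofReal_toReal hδtop
    have hset : {y : Euc m | ENNReal.ofReal l0 <
        weakNorm volume p1 fun x => Gfn n m p1 (x, y)} = Set.univ := by
      refine Set.eq_univ_of_forall fun y => ?_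
      exact lt_of_lt_of_le hlt (weak_lb hn' hp1 y)
    have huniv : volume (Set.univ : Set (Euc m)) = ⊤ := by
      haveI : Inhabited (Fin m) := ⟨⟨0, hm⟩⟩
      haveI : Nontrivial (Euc m) := inferInstance
      exact MeasureTheory.measure_univ_of_isAddLeftInvariant volume
    rw [eq_top_iff, iteratedWeakNorm]
    refine le_trans ?_ (le_iSup₂ l0 hl0pos)
    rw [hset, huniv, ENNReal.top_rpow_of_pos (by positivity),
      ENNReal.mul_top (by simpa [ENNReal.ofReal_eq_zero] using hl0pos.not_ge)]
end
end

section
/- Let 0 < p1, p2 < ∞, let f be a measurable function on ℝ^n and g a measurable function on ℝ^m, and let f⊗g denote the function (x,y) ↦ f(x)·g(y) on ℝ^n × ℝ^m. Then ‖f⊗g‖_{L^{(p1,p2),∞}} ≤ ‖f‖_{L^{p1,∞}}·‖g‖_{L^{p2}}. In particular, if f ∈ L^{p1,∞}(ℝ^n) and g ∈ L^{p2}(ℝ^m), then f⊗g ∈ L^{(p1,p2),∞}(ℝ^n×ℝ^m). -/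
open MeasureTheory ENNReal Filter Topology Set

noncomputable section

/-- For `0 < p1, p2 < ∞`, `‖f⊗g‖_{L^{(p1,p2),∞}} ≤ ‖f‖_{L^{p1,∞}}·‖g‖_{L^{p2}}`.
In particular `f ∈ L^{p1,∞}` and `g ∈ L^{p2}` imply `f⊗g ∈ L^{(p1,p2),∞}`. -/
theorem stmt3 (n m : ℕ) (p1 p2 : ℝ) (hp1 : 0 < p1) (hp2 : 0 < p2)
    (f : Euc n → ℝ) (g : Euc m → ℝ) (hf : Measurable f) (hg : Measurable g) :
    mixedWeakNorm p1 p2 (fun z => f z.1 * g z.2) ≤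
      weakNorm (volume : Measure (Euc n)) p1 f *
        strongNorm (volume : Measure (Euc m)) p2 g := by
  set W := weakNorm (volume : Measure (Euc n)) p1 f with hW
  rw [mixedWeakNorm]
  apply iSup₂_le
  intro l hl
  -- key pointwise bound
  have key : ∀ y : Euc m, ENNReal.ofReal l *
      (volume {x : Euc n | l < |f x * g y|}) ^ (1/p1) ≤ W * ENNReal.ofReal |g y| := by
    intro y
    by_cases hgy : g y = 0
    · have h0 : {x : Euc n | l < |f x * g y|} = ∅ := by
        ext x; simp [hgy, not_lt, hl.le]
      rw [h0, measure_empty, ENNReal.zero_rpow_of_pos (by positivity : (0:ℝ) < 1/p1),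
        mul_zero]
      exact zero_le
    · have hgy' : 0 < |g y| := abs_pos.mpr hgy
      have hset : {x : Euc n | l < |f x * g y|} = {x : Euc n | l / |g y| < |f x|} := by
        ext x
        simp only [Set.mem_setOf_eq, abs_mul]
        exact (div_lt_iff₀ hgy').symm
      rw [hset]
      have hl' : 0 < l / |g y| := div_pos hl hgy'
      have hweak : ENNReal.ofReal (l / |g y|) *
          (volume {x : Euc n | l / |g y| < |f x|}) ^ (1/p1) ≤ W :=
        le_iSup₂ (f := fun (t : ℝ) (_ : 0 < t) =>
          ENNReal.ofReal t * volume {x : Euc n | t < |f x|} ^ (1/p1)) (l / |g y|) hl'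
      calc ENNReal.ofReal l * (volume {x : Euc n | l / |g y| < |f x|}) ^ (1/p1)
          = ENNReal.ofReal |g y| * (ENNReal.ofReal (l / |g y|) *
              (volume {x : Euc n | l / |g y| < |f x|}) ^ (1/p1)) := by
            rw [← mul_assoc, ← ENNReal.ofReal_mul (abs_nonneg _)]
            congr 2
            field_simp
        _ ≤ ENNReal.ofReal |g y| * W := by gcongr
        _ = W * ENNReal.ofReal |g y| := mul_comm _ _
  have hmix : mixedNorm p1 p2
      ({z : Euc n × Euc m | l < |(fun z => f z.1 * g z.2) z|}.indicator fun _ => (1:ℝ)) =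
      (∫⁻ y : Euc m, (volume {x : Euc n | l < |f x * g y|}) ^ (p2/p1)) ^ (1/p2) := by
    rw [mixedNorm]
    congr 1
    apply lintegral_congr
    intro y
    congr 1
    have heq : (fun x : Euc n => ENNReal.ofReal
        |({z : Euc n × Euc m | l < |(fun z => f z.1 * g z.2) z|}.indicator
          (fun _ => (1:ℝ))) (x, y)| ^ p1) =
        {x : Euc n | l < |f x * g y|}.indicator (fun _ => (1:ℝ≥0∞)) := by
      funext x
      by_cases hx : l < |f x * g y|
      · simp only [abs_mul] at hx
        simp [Set.indicator_of_mem, hx, Set.mem_setOf_eq]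
      · simp only [abs_mul] at hx
        simp [Set.indicator_of_notMem, hx, Set.mem_setOf_eq,
          ENNReal.zero_rpow_of_pos hp1]
    rw [heq]
    exact lintegral_indicator_one
      (measurableSet_lt measurable_const (hf.mul_const _).abs)
  rw [hmix]
  have step : (ENNReal.ofReal l) ^ p2 *
      ∫⁻ y : Euc m, (volume {x : Euc n | l < |f x * g y|}) ^ (p2/p1) ≤
      W ^ p2 * ∫⁻ y : Euc m, (ENNReal.ofReal |g y|) ^ p2 := by
    rw [← lintegral_const_mul' _ _
        (ENNReal.rpow_ne_top_of_nonneg hp2.le ENNReal.ofReal_ne_top),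
      ← lintegral_const_mul _ (hg.abs.ennreal_ofReal.pow_const p2)]
    apply lintegral_mono
    intro y
    calc (ENNReal.ofReal l) ^ p2 * (volume {x : Euc n | l < |f x * g y|}) ^ (p2/p1)
        = (ENNReal.ofReal l * (volume {x : Euc n | l < |f x * g y|}) ^ (1/p1)) ^ p2 := by
          rw [ENNReal.mul_rpow_of_nonneg _ _ hp2.le, ← ENNReal.rpow_mul]
          congr 2; ring
      _ ≤ (W * ENNReal.ofReal |g y|) ^ p2 := ENNReal.rpow_le_rpow (key y) hp2.le
      _ = W ^ p2 * (ENNReal.ofReal |g y|) ^ p2 := ENNReal.mul_rpow_of_nonneg _ _ hp2.le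
  calc ENNReal.ofReal l *
      (∫⁻ y : Euc m, (volume {x : Euc n | l < |f x * g y|}) ^ (p2/p1)) ^ (1/p2)
      = ((ENNReal.ofReal l) ^ p2 *
        ∫⁻ y : Euc m, (volume {x : Euc n | l < |f x * g y|}) ^ (p2/p1)) ^ (1/p2) := by
        rw [ENNReal.mul_rpow_of_nonneg _ _ (by positivity : (0:ℝ) ≤ 1/p2),
          ← ENNReal.rpow_mul, mul_one_div_cancel hp2.ne', ENNReal.rpow_one]
    _ ≤ (W ^ p2 * ∫⁻ y : Euc m, (ENNReal.ofReal |g y|) ^ p2) ^ (1/p2) :=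
        ENNReal.rpow_le_rpow step (by positivity)
    _ = W * strongNorm (volume : Measure (Euc m)) p2 g := by
        rw [ENNReal.mul_rpow_of_nonneg _ _ (by positivity : (0:ℝ) ≤ 1/p2),
          ← ENNReal.rpow_mul, mul_one_div_cancel hp2.ne', ENNReal.rpow_one]
        rfl
end
end

section
/- Let 0 < p1, p2 < ∞, let f be a measurable function on ℝ^n and g a measurable function on ℝ^m, and let f⊗g denote (x,y) ↦ f(x)·g(y). Then ‖f‖_{L^{p1,∞}}·‖g‖_{L^{p2,∞}} ≤ ‖f⊗g‖_{L^{(p1,p2),∞}}. In particular, if f⊗g ∈ L^{(p1,p2),∞}(ℝ^n×ℝ^m) and neither f nor g vanishes almost everywhere, then f ∈ L^{p1,∞}(ℝ^n) and g ∈ L^{p2,∞}(ℝ^m). -/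
open MeasureTheory ENNReal Filter Topology Set

noncomputable section

/-- For `0 < p1, p2 < ∞`,
`‖f‖_{L^{p1,∞}}·‖g‖_{L^{p2,∞}} ≤ ‖f⊗g‖_{L^{(p1,p2),∞}}`.  In particular, if
`f⊗g ∈ L^{(p1,p2),∞}` and neither factor vanishes a.e., then `f ∈ L^{p1,∞}` and
`g ∈ L^{p2,∞}`. -/
theorem stmt4 (n m : ℕ) (p1 p2 : ℝ) (hp1 : 0 < p1) (hp2 : 0 < p2)
    (f : Euc n → ℝ) (g : Euc m → ℝ) (hf : Measurable f) (hg : Measurable g) :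
    weakNorm (volume : Measure (Euc n)) p1 f *
        weakNorm (volume : Measure (Euc m)) p2 g ≤
      mixedWeakNorm p1 p2 (fun z => f z.1 * g z.2) := by
  rw [weakNorm, weakNorm, ENNReal.iSup_mul]
  refine iSup_le fun a => ?_
  rw [ENNReal.iSup_mul]
  refine iSup_le fun ha => ?_
  rw [ENNReal.mul_iSup]
  refine iSup_le fun b => ?_
  rw [ENNReal.mul_iSup]
  refine iSup_le fun hb => ?_
  have hab : 0 < a * b := mul_pos ha hb
  refine le_trans ?_ (le_iSup_of_le (a * b) (le_iSup_of_le hab le_rfl))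
  set A : ℝ≥0∞ := volume {x | a < |f x|} with hA
  set B : ℝ≥0∞ := volume {y | b < |g y|} with hB
  have hrw : ENNReal.ofReal a * A ^ (1 / p1) * (ENNReal.ofReal b * B ^ (1 / p2))
      = ENNReal.ofReal (a * b) * (A ^ (1 / p1) * B ^ (1 / p2)) := by
    rw [ENNReal.ofReal_mul ha.le]; ring
  rw [hrw]
  refine mul_le_mul_right ?_ _
  -- compute the inner integral of the indicator
  set S : Set (Euc n × Euc m) := {z | a * b < |f z.1 * g z.2|} with hS
  have hSmeas : MeasurableSet S :=
    measurableSet_lt measurable_const ((hf.comp measurable_fst).mul (hg.comp measurable_snd)).abs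
  have hinner : ∀ y : Euc m,
      (∫⁻ x : Euc n, ENNReal.ofReal |S.indicator (fun _ => (1 : ℝ)) (x, y)| ^ p1)
        = volume {x | a * b < |f x * g y|} := by
    intro y
    have hpt : ∀ x : Euc n,
        ENNReal.ofReal |S.indicator (fun _ => (1 : ℝ)) (x, y)| ^ p1
          = ({x | a * b < |f x * g y|} : Set (Euc n)).indicator (fun _ => (1 : ℝ≥0∞)) x := by
      intro x
      by_cases h : a * b < |f x * g y|
      · have h1 : (x, y) ∈ S := h
        have h2 : x ∈ {x : Euc n | a * b < |f x * g y|} := h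
        rw [Set.indicator_of_mem h1, Set.indicator_of_mem h2]
        simp
      · have h1 : (x, y) ∉ S := h
        have h2 : x ∉ {x : Euc n | a * b < |f x * g y|} := h
        rw [Set.indicator_of_notMem h1, Set.indicator_of_notMem h2]
        simp [ENNReal.zero_rpow_of_pos hp1]
    have hmx : MeasurableSet {x : Euc n | a * b < |f x * g y|} :=
      measurableSet_lt measurable_const (hf.mul measurable_const).abs
    simp only [hpt]
    rw [lintegral_indicator hmx]
    simp
  simp only [mixedNorm, hinner]
  -- lower bound the outer integral
  have hTmeas : MeasurableSet {y : Euc m | b < |g y|} :=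
    measurableSet_lt measurable_const hg.abs
  have hbound : A ^ (p2 / p1) * B ≤
      ∫⁻ y : Euc m, (volume {x : Euc n | a * b < |f x * g y|}) ^ (p2 / p1) := by
    calc A ^ (p2 / p1) * B
        = ∫⁻ _ in {y : Euc m | b < |g y|}, A ^ (p2 / p1) := by
          rw [setLIntegral_const, hB]
      _ ≤ ∫⁻ y in {y : Euc m | b < |g y|},
            (volume {x : Euc n | a * b < |f x * g y|}) ^ (p2 / p1) := by
          refine setLIntegral_mono' hTmeas fun y hy => ?_
          refine ENNReal.rpow_le_rpow (measure_mono fun x hx => ?_)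
            (by positivity)
          have : a * b < |f x| * |g y| :=
            mul_lt_mul'' hx hy ha.le hb.le
          simpa [abs_mul] using this
      _ ≤ _ := setLIntegral_le_lintegral _ _
  calc A ^ (1 / p1) * B ^ (1 / p2)
      = (A ^ (p2 / p1) * B) ^ (1 / p2) := by
        rw [ENNReal.mul_rpow_of_nonneg _ _ (by positivity), ← ENNReal.rpow_mul]
        have hexp : p2 / p1 * (1 / p2) = 1 / p1 := by
          rw [div_mul_div_comm, mul_one, mul_comm p1 p2, ← div_div, div_self hp2.ne']
        rw [hexp]
    _ ≤ _ := ENNReal.rpow_le_rpow hbound (by positivity)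
end
end

section
/- Monotone convergence for the mixed weak norm: let 0 < p1, p2 < ∞ and let {f_k : k ≥ 1} be a sequence of non-negative measurable functions on ℝ^n × ℝ^m such that f_k(x,y) ≤ f_{k+1}(x,y) almost everywhere for every k ≥ 1. Then ‖ lim_{k→∞} f_k ‖_{L^{(p1,p2),∞}} = lim_{k→∞} ‖ f_k ‖_{L^{(p1,p2),∞}} (with values in [0,∞], the pointwise limit taken a.e.). -/
open MeasureTheory ENNReal Filter Topology Set

noncomputable section

lemma ennreal_iSup_rpow (c : ℝ) (hc : 0 < c) (h : ℕ → ℝ≥0∞) :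
    (⨆ k, h k) ^ c = ⨆ k, h k ^ c :=
  Monotone.map_iSup_of_continuousAt (ENNReal.continuous_rpow_const.continuousAt)
    (fun _ _ hab => ENNReal.rpow_le_rpow hab hc.le)
    (by simp [ENNReal.zero_rpow_of_pos hc])

lemma mixedNorm_indicator {n m : ℕ} (p1 p2 : ℝ) (hp1 : 0 < p1)
    (S : Set (Euc n × Euc m)) (hS : MeasurableSet S) :
    mixedNorm p1 p2 (S.indicator fun _ => (1 : ℝ)) =
      (∫⁻ y : Euc m, (volume ((fun x => (x, y)) ⁻¹' S)) ^ (p2 / p1)) ^ (1 / p2) := by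
  unfold mixedNorm
  congr 1
  refine lintegral_congr fun y => ?_
  congr 1
  have h1 : ∀ x : Euc n, ENNReal.ofReal |S.indicator (fun _ => (1:ℝ)) (x, y)| ^ p1
      = ((fun x => (x, y)) ⁻¹' S).indicator (fun _ => (1 : ℝ≥0∞)) x := by
    intro x
    by_cases h : (x, y) ∈ S <;>
      simp [Set.indicator_apply, h, ENNReal.zero_rpow_of_pos hp1]
  rw [lintegral_congr h1]
  have hSy : MeasurableSet ((fun x : Euc n => (x, y)) ⁻¹' S) :=
    hS.preimage (measurable_prodMk_right)
  rw [← lintegral_indicator_one hSy]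
  rfl

/-- a.e. slices of a null set in the product are null. -/
lemma ae_slice_null {n m : ℕ} (N : Set (Euc n × Euc m)) (hN : MeasurableSet N)
    (h0 : volume N = 0) :
    ∀ᵐ y ∂(volume : Measure (Euc m)), volume ((fun x : Euc n => (x, y)) ⁻¹' N) = 0 := by
  rw [Measure.volume_eq_prod, Measure.prod_apply_symm hN] at h0
  have := (lintegral_eq_zero_iff (measurable_measure_prodMk_right hN)).1 h0
  filter_upwards [this] with y hy using hy


/-- Monotone convergence for the mixed weak norm.  If `{f_k}` is an
a.e. non-decreasing sequence of non-negative measurable functions on `ℝ^n × ℝ^m`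
(taking values in `[0,∞]`) whose pointwise limit a.e. is `g`, then
`‖g‖_{L^{(p1,p2),∞}} = lim_k ‖f_k‖_{L^{(p1,p2),∞}}`. -/
theorem stmt6 (n m : ℕ) (p1 p2 : ℝ) (hp1 : 0 < p1) (hp2 : 0 < p2)
    (f : ℕ → Euc n × Euc m → ℝ≥0∞) (hmeas : ∀ k, Measurable (f k))
    (hmono : ∀ k, ∀ᵐ z ∂(volume : Measure (Euc n × Euc m)), f k z ≤ f (k + 1) z)
    (g : Euc n × Euc m → ℝ≥0∞) (hg : Measurable g)
    (hlim : ∀ᵐ z ∂(volume : Measure (Euc n × Euc m)),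
      Tendsto (fun k => f k z) atTop (𝓝 (g z))) :
    Tendsto (fun k => mixedWeakNormE p1 p2 (f k)) atTop (𝓝 (mixedWeakNormE p1 p2 g)) := by
  have hq : 0 < p2 / p1 := div_pos hp2 hp1
  have hq2 : 0 < 1 / p2 := by positivity
  -- the good property
  set P : Euc n × Euc m → Prop :=
    fun z => (Monotone fun k => f k z) ∧ g z = ⨆ k, f k z with hP
  have hae : ∀ᵐ z ∂(volume : Measure (Euc n × Euc m)), P z := by
    have h1 : ∀ᵐ z ∂(volume : Measure (Euc n × Euc m)), ∀ k, f k z ≤ f (k + 1) z :=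
      ae_all_iff.2 hmono
    filter_upwards [h1, hlim] with z h1z h2z
    have hmz : Monotone fun k => f k z := monotone_nat_of_le_succ h1z
    exact ⟨hmz, (iSup_eq_of_tendsto hmz h2z).symm⟩
  set Nb : Set (Euc n × Euc m) := toMeasurable volume {z | ¬ P z} with hNb
  have hNmeas : MeasurableSet Nb := measurableSet_toMeasurable _ _
  have hNnull : volume Nb = 0 := by
    rw [hNb, measure_toMeasurable]
    exact hae
  have hNgood : ∀ z, z ∉ Nb → P z := by
    intro z hz
    by_contra h
    exact hz (subset_toMeasurable _ _ h)
  have hslice := ae_slice_null Nb hNmeas hNnull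
  -- measurability of level sets
  have hSmeas : ∀ (k : ℕ) (c : ℝ≥0∞), MeasurableSet {z | c < f k z} :=
    fun k c => (hmeas k) measurableSet_Ioi
  have hSgmeas : ∀ c : ℝ≥0∞, MeasurableSet {z | c < g z} :=
    fun c => hg measurableSet_Ioi
  -- per-slice computation
  have hperY : ∀ (c : ℝ≥0∞) (y : Euc m), volume ((fun x : Euc n => (x, y)) ⁻¹' Nb) = 0 →
      (Monotone fun k => volume ((fun x : Euc n => (x, y)) ⁻¹' {z | c < f k z})) ∧
      volume ((fun x : Euc n => (x, y)) ⁻¹' {z | c < g z}) =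
        ⨆ k, volume ((fun x : Euc n => (x, y)) ⁻¹' {z | c < f k z}) := by
    intro c y hy
    set Ny : Set (Euc n) := (fun x : Euc n => (x, y)) ⁻¹' Nb with hNy
    set A : ℕ → Set (Euc n) := fun k => ((fun x : Euc n => (x, y)) ⁻¹' {z | c < f k z}) \ Ny
      with hA
    have hAmono : Monotone A := by
      intro k j hkj x hx
      refine ⟨?_, hx.2⟩
      have hgood := hNgood (x, y) hx.2
      exact lt_of_lt_of_le hx.1 (hgood.1 hkj)
    have hAvol : ∀ k, volume (A k) = volume ((fun x : Euc n => (x, y)) ⁻¹' {z | c < f k z}) :=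
      fun k => measure_diff_null hy
    constructor
    · intro k j hkj
      show volume ((fun x : Euc n => (x, y)) ⁻¹' {z | c < f k z}) ≤
        volume ((fun x : Euc n => (x, y)) ⁻¹' {z | c < f j z})
      rw [← hAvol k, ← hAvol j]
      exact measure_mono (hAmono hkj)
    · have hU : ((fun x : Euc n => (x, y)) ⁻¹' {z | c < g z}) \ Ny = ⋃ k, A k := by
        ext x
        simp only [hA, Set.mem_diff, Set.mem_iUnion, Set.mem_preimage, Set.mem_setOf_eq]
        constructor
        · rintro ⟨hx1, hx2⟩
          have hgood := hNgood (x, y) hx2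
          rw [hgood.2, lt_iSup_iff] at hx1
          obtain ⟨k, hk⟩ := hx1
          exact ⟨k, hk, hx2⟩
        · rintro ⟨k, hk, hx2⟩
          have hgood := hNgood (x, y) hx2
          refine ⟨lt_of_lt_of_le hk ?_, hx2⟩
          rw [hgood.2]
          exact le_iSup (fun k => f k (x, y)) k
      calc volume ((fun x : Euc n => (x, y)) ⁻¹' {z | c < g z})
          = volume (((fun x : Euc n => (x, y)) ⁻¹' {z | c < g z}) \ Ny) :=
            (measure_diff_null hy).symm
        _ = volume (⋃ k, A k) := by rw [hU]
        _ = ⨆ k, volume (A k) := (hAmono.directed_le).measure_iUnion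
        _ = ⨆ k, volume ((fun x : Euc n => (x, y)) ⁻¹' {z | c < f k z}) := by
            simp_rw [hAvol]
  -- key: the mixed norm of level-set indicators converges
  have key : ∀ c : ℝ≥0∞,
      mixedNorm p1 p2 ({z | c < g z}.indicator fun _ => (1 : ℝ)) =
        ⨆ k, mixedNorm p1 p2 ({z | c < f k z}.indicator fun _ => (1 : ℝ)) := by
    intro c
    rw [mixedNorm_indicator p1 p2 hp1 _ (hSgmeas c)]
    have hrw : ∀ k, mixedNorm p1 p2 ({z | c < f k z}.indicator fun _ => (1 : ℝ)) =
        (∫⁻ y : Euc m, (volume ((fun x => (x, y)) ⁻¹' {z | c < f k z})) ^ (p2 / p1))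
          ^ (1 / p2) := fun k => mixedNorm_indicator p1 p2 hp1 _ (hSmeas k c)
    simp_rw [hrw]
    rw [← ennreal_iSup_rpow _ hq2]
    congr 1
    rw [← lintegral_iSup']
    · refine lintegral_congr_ae ?_
      filter_upwards [hslice] with y hy
      obtain ⟨hmonoy, heq⟩ := hperY c y hy
      rw [heq, ennreal_iSup_rpow _ hq]
    · intro k
      exact ((ENNReal.continuous_rpow_const.measurable).comp
        (measurable_measure_prodMk_right (hSmeas k c))).aemeasurable
    · filter_upwards [hslice] with y hy
      intro k j hkj
      exact ENNReal.rpow_le_rpow ((hperY c y hy).1 hkj) hq.le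
  -- monotonicity of the weak norms
  have hnormMono : Monotone fun k => mixedWeakNormE p1 p2 (f k) := by
    intro k j hkj
    unfold mixedWeakNormE
    refine iSup_le fun l => iSup_le fun hl => ?_
    refine le_iSup_of_le l (le_iSup_of_le hl ?_)
    refine mul_le_mul_right ?_ _
    rw [mixedNorm_indicator p1 p2 hp1 _ (hSmeas k _),
      mixedNorm_indicator p1 p2 hp1 _ (hSmeas j _)]
    refine ENNReal.rpow_le_rpow (lintegral_mono_ae ?_) hq2.le
    filter_upwards [hslice] with y hy
    exact ENNReal.rpow_le_rpow ((hperY _ y hy).1 hkj) hq.le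
  -- the supremum identity
  have hsup : mixedWeakNormE p1 p2 g = ⨆ k, mixedWeakNormE p1 p2 (f k) := by
    unfold mixedWeakNormE
    simp_rw [key, ENNReal.mul_iSup]
    apply le_antisymm
    · refine iSup_le fun l => iSup_le fun hl => iSup_le fun k => ?_
      exact le_iSup_of_le k (le_iSup_of_le l (le_iSup_of_le hl le_rfl))
    · refine iSup_le fun k => iSup_le fun l => iSup_le fun hl => ?_
      exact le_iSup_of_le l (le_iSup_of_le hl (le_iSup_of_le k le_rfl))
  rw [hsup]
  exact tendsto_atTop_iSup hnormMono
end
end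

section
/- Fatou's lemma for the mixed weak norm: let 0 < p1, p2 < ∞ and let {f_k : k ≥ 1} be a sequence of non-negative measurable functions on ℝ^n × ℝ^m. Then ‖ liminf_{k→∞} f_k ‖_{L^{(p1,p2),∞}} ≤ liminf_{k→∞} ‖ f_k ‖_{L^{(p1,p2),∞}} (with values in [0,∞], the liminf of the functions taken pointwise). -/
open MeasureTheory ENNReal Filter Topology Set

noncomputable section

-- helper: monotone continuous map of liminf
lemma map_liminf_le (g : ℝ≥0∞ → ℝ≥0∞) (hg : Monotone g) (hc : Continuous g)
    (u : ℕ → ℝ≥0∞) : g (liminf u atTop) ≤ liminf (fun k => g (u k)) atTop :=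
  (hg.map_liminf_of_continuousAt u hc.continuousAt).le

-- helper: indicator rewrite
lemma ind_pow {α : Type*} (S : Set α) (p : ℝ) (hp : 0 < p) (z : α) :
    ENNReal.ofReal |S.indicator (fun _ => (1:ℝ)) z| ^ p = S.indicator (fun _ => (1:ℝ≥0∞)) z := by
  by_cases hz : z ∈ S <;>
    simp [hz, indicator_of_mem, indicator_of_notMem, ENNReal.zero_rpow_of_pos hp]

/-- Fatou's lemma for the mixed weak norm: for any sequence `{f_k}` of
non-negative measurable functions on `ℝ^n × ℝ^m` (values in `[0,∞]`),
`‖liminf_k f_k‖_{L^{(p1,p2),∞}} ≤ liminf_k ‖f_k‖_{L^{(p1,p2),∞}}`. -/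
theorem stmt7 (n m : ℕ) (p1 p2 : ℝ) (hp1 : 0 < p1) (hp2 : 0 < p2)
    (f : ℕ → Euc n × Euc m → ℝ≥0∞) (hmeas : ∀ k, Measurable (f k)) :
    mixedWeakNormE p1 p2 (fun z => liminf (fun k => f k z) atTop) ≤
      liminf (fun k => mixedWeakNormE p1 p2 (f k)) atTop := by
  rw [mixedWeakNormE]
  apply iSup₂_le
  intro l hl
  set A : Set (Euc n × Euc m) := {z | ENNReal.ofReal l < liminf (fun k => f k z) atTop} with hA
  set B : ℕ → Set (Euc n × Euc m) := fun k => {z | ENNReal.ofReal l < f k z} with hB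
  have hBmeas : ∀ k, MeasurableSet (B k) := fun k =>
    measurableSet_lt measurable_const (hmeas k)
  -- pointwise indicator inequality
  have hpt : ∀ z, A.indicator (fun _ => (1:ℝ≥0∞)) z ≤
      liminf (fun k => (B k).indicator (fun _ => (1:ℝ≥0∞)) z) atTop := by
    intro z
    by_cases hz : z ∈ A
    · have hz' : ENNReal.ofReal l < liminf (fun k => f k z) atTop := hz
      have hev : ∀ᶠ k in atTop, z ∈ B k := eventually_lt_of_lt_liminf hz'
      rw [indicator_of_mem hz]
      exact le_liminf_of_le (by isBoundedDefault)
        (hev.mono fun k hk => by rw [indicator_of_mem hk])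
    · rw [indicator_of_notMem hz]; exact zero_le
  -- rewrite mixedNorm of indicators
  have hrw : ∀ (S : Set (Euc n × Euc m)),
      mixedNorm p1 p2 (S.indicator fun _ => (1:ℝ)) =
        (∫⁻ y : Euc m, (∫⁻ x : Euc n, S.indicator (fun _ => (1:ℝ≥0∞)) (x, y)) ^ (p2 / p1)) ^ (1 / p2) := by
    intro S
    simp only [mixedNorm, ind_pow S p1 hp1]
  rw [hrw]
  -- inner Fatou
  have hinner : ∀ y : Euc m,
      (∫⁻ x : Euc n, A.indicator (fun _ => (1:ℝ≥0∞)) (x, y)) ≤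
        liminf (fun k => ∫⁻ x : Euc n, (B k).indicator (fun _ => (1:ℝ≥0∞)) (x, y)) atTop := by
    intro y
    calc (∫⁻ x : Euc n, A.indicator (fun _ => (1:ℝ≥0∞)) (x, y))
        ≤ ∫⁻ x : Euc n, liminf (fun k => (B k).indicator (fun _ => (1:ℝ≥0∞)) (x, y)) atTop :=
          lintegral_mono fun x => hpt (x, y)
      _ ≤ _ := lintegral_liminf_le fun k =>
          ((measurable_const.indicator (hBmeas k)).comp (measurable_prodMk_right))
  -- measurability of inner integrals as functions of y
  have hinmeas : ∀ k, Measurable fun y : Euc m =>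
      (∫⁻ x : Euc n, (B k).indicator (fun _ => (1:ℝ≥0∞)) (x, y)) := by
    intro k
    exact Measurable.lintegral_prod_left (measurable_const.indicator (hBmeas k))
  -- outer step
  have houter :
      (∫⁻ y : Euc m, (∫⁻ x : Euc n, A.indicator (fun _ => (1:ℝ≥0∞)) (x, y)) ^ (p2 / p1)) ≤
        liminf (fun k => ∫⁻ y : Euc m,
          (∫⁻ x : Euc n, (B k).indicator (fun _ => (1:ℝ≥0∞)) (x, y)) ^ (p2 / p1)) atTop := by
    calc (∫⁻ y : Euc m, (∫⁻ x : Euc n, A.indicator (fun _ => (1:ℝ≥0∞)) (x, y)) ^ (p2 / p1))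
        ≤ ∫⁻ y : Euc m, liminf (fun k =>
            (∫⁻ x : Euc n, (B k).indicator (fun _ => (1:ℝ≥0∞)) (x, y)) ^ (p2 / p1)) atTop := by
          apply lintegral_mono
          intro y
          refine le_trans (ENNReal.rpow_le_rpow (hinner y) (by positivity)) ?_
          exact map_liminf_le _ (ENNReal.monotone_rpow_of_nonneg (by positivity))
            ENNReal.continuous_rpow_const _
      _ ≤ _ := lintegral_liminf_le fun k => (hinmeas k).pow_const _
  -- final step
  calc ENNReal.ofReal l *
      (∫⁻ y : Euc m, (∫⁻ x : Euc n, A.indicator (fun _ => (1:ℝ≥0∞)) (x, y)) ^ (p2 / p1)) ^ (1 / p2)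
      ≤ ENNReal.ofReal l * liminf (fun k => (∫⁻ y : Euc m,
          (∫⁻ x : Euc n, (B k).indicator (fun _ => (1:ℝ≥0∞)) (x, y)) ^ (p2 / p1)) ^ (1 / p2)) atTop := by
        gcongr
        refine le_trans (ENNReal.rpow_le_rpow houter (by positivity)) ?_
        exact map_liminf_le _ (ENNReal.monotone_rpow_of_nonneg (by positivity))
          ENNReal.continuous_rpow_const _
    _ ≤ liminf (fun k => ENNReal.ofReal l * (∫⁻ y : Euc m,
          (∫⁻ x : Euc n, (B k).indicator (fun _ => (1:ℝ≥0∞)) (x, y)) ^ (p2 / p1)) ^ (1 / p2)) atTop :=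
        map_liminf_le _ (fun a b hab => mul_le_mul_right hab _)
          (ENNReal.continuous_const_mul ENNReal.ofReal_ne_top) _
    _ ≤ liminf (fun k => mixedWeakNormE p1 p2 (f k)) atTop := by
        refine liminf_le_liminf (Eventually.of_forall fun k => ?_)
        rw [← hrw (B k)]
        exact le_iSup₂ (f := fun (l : ℝ) (_ : 0 < l) => ENNReal.ofReal l *
          mixedNorm p1 p2 ({z | ENNReal.ofReal l < f k z}.indicator fun _ => (1:ℝ))) l hl
end
end

section
/- Let 0 < p1, p2 < ∞ and let {f_k : k ≥ 1} and f be measurable functions on ℝ^n × ℝ^m with lim_{k→∞} ‖f_k − f‖_{L^{p2,∞}(L^{p1,∞})} = 0 (convergence in the iterated weak norm). Then there is a strictly increasing sequence of indices (k_l) such that f_{k_l}(x,y) → f(x,y) as l → ∞ for almost every (x,y) ∈ ℝ^n × ℝ^m. -/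
open MeasureTheory ENNReal Filter Topology Set

noncomputable section

section Aux

open ENNReal

lemma cheb_le {q : ℝ} (hq : 0 < q) {t M N : ℝ≥0∞}
    (hle : t * M ^ (1/q) ≤ N) (hN : N < t * t ^ (1/q)) : M ≤ t := by
  by_contra hM
  push_neg at hM
  have h1 : t ^ (1/q) ≤ M ^ (1/q) := ENNReal.rpow_le_rpow hM.le (by positivity)
  exact absurd (hN.trans_le ((mul_le_mul_right h1 t).trans hle)) (lt_irrefl N)

lemma cheb_ofReal {q : ℝ} (hq : 0 < q) {e a : ℝ} (he : 0 < e) (ha : 0 ≤ a) {M : ℝ≥0∞}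
    (h : ENNReal.ofReal e * M ^ (1/q) ≤ ENNReal.ofReal a) :
    M ≤ ENNReal.ofReal ((a/e)^q) := by
  have h1 : M ^ (1/q) ≤ ENNReal.ofReal (a/e) := by
    rw [ENNReal.ofReal_div_of_pos he]
    exact (ENNReal.le_div_iff_mul_le (Or.inl (ENNReal.ofReal_pos.2 he).ne')
      (Or.inl ENNReal.ofReal_ne_top)).2 (by rwa [mul_comm])
  have h2 : M = (M ^ (1/q)) ^ q := by
    rw [← ENNReal.rpow_mul, one_div, inv_mul_cancel₀ hq.ne', ENNReal.rpow_one]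
  rw [h2]
  calc (M ^ (1/q)) ^ q ≤ (ENNReal.ofReal (a/e)) ^ q := ENNReal.rpow_le_rpow h1 hq.le
    _ = ENNReal.ofReal ((a/e)^q) := ENNReal.ofReal_rpow_of_nonneg (by positivity) hq.le

lemma sum_half : ∑' l : ℕ, ENNReal.ofReal ((1/2:ℝ)^l) ≠ ∞ := by
  rw [← ENNReal.ofReal_tsum_of_nonneg (fun l => by positivity)
    (summable_geometric_of_lt_one (by norm_num) (by norm_num))]
  exact ENNReal.ofReal_ne_top

lemma sum_aux {q : ℝ} (hq : 0 < q) {c : ℝ} (hc : 0 < c) :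
    ∑' l : ℕ, ENNReal.ofReal (((1/2:ℝ)^l / c) ^ q) ≠ ∞ := by
  have hsume : Summable (fun l : ℕ => ((1/2:ℝ)^l / c) ^ q) := by
    have heq : (fun l : ℕ => ((1/2:ℝ)^l / c) ^ q) = fun l : ℕ => ((1/2:ℝ)^q)^l / c^q := by
      funext l
      rw [Real.div_rpow (by positivity) hc.le]
      congr 1
      rw [← Real.rpow_natCast (1/2:ℝ) l, ← Real.rpow_natCast ((1/2:ℝ)^q) l,
        ← Real.rpow_mul (by norm_num), ← Real.rpow_mul (by norm_num), mul_comm]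
    rw [heq]
    exact (summable_geometric_of_lt_one (by positivity)
      (Real.rpow_lt_one (by norm_num) (by norm_num) hq)).div_const _
  rw [← ENNReal.ofReal_tsum_of_nonneg (fun l => by positivity) hsume]
  exact ENNReal.ofReal_ne_top

end Aux

/-- If `f_k → f` in the iterated weak norm `L^{p2,∞}(L^{p1,∞})`, then some
subsequence `f_{k_l}` converges to `f` almost everywhere on `ℝ^n × ℝ^m`. -/
theorem stmt9 (n m : ℕ) (p1 p2 : ℝ) (hp1 : 0 < p1) (hp2 : 0 < p2)
    (f : ℕ → Euc n × Euc m → ℝ) (g : Euc n × Euc m → ℝ)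
    (hmeas : ∀ k, Measurable (f k)) (hg : Measurable g)
    (hconv : Tendsto (fun k => iteratedWeakNorm p1 p2 (fun z => f k z - g z)) atTop (𝓝 0)) :
    ∃ φ : ℕ → ℕ, StrictMono φ ∧
      ∀ᵐ z ∂(volume : Measure (Euc n × Euc m)),
        Tendsto (fun l => f (φ l) z) atTop (𝓝 (g z)) := by
  set t : ℕ → ℝ := fun l => (1/2:ℝ)^l with ht_def
  have ht : ∀ l, 0 < t l := fun l => by positivity
  have hεpos : ∀ l : ℕ,
      (0:ℝ≥0∞) < ENNReal.ofReal (t l) * ENNReal.ofReal (t l) ^ (1/p2) :=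
    fun l => mul_pos (ENNReal.ofReal_pos.2 (ht l)).ne'
      (ENNReal.rpow_pos (ENNReal.ofReal_pos.2 (ht l)) ENNReal.ofReal_ne_top).ne'
  have hev : ∀ l : ℕ, ∃ N, ∀ k ≥ N, iteratedWeakNorm p1 p2 (fun z => f k z - g z) <
      ENNReal.ofReal (t l) * ENNReal.ofReal (t l) ^ (1/p2) := fun l =>
    eventually_atTop.1 (hconv.eventually (gt_mem_nhds (hεpos l)))
  obtain ⟨φ, hφ, hφN⟩ := extraction_forall_of_eventually' hev
  refine ⟨φ, hφ, ?_⟩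
  -- the bad sets in y
  set B : ℕ → Set (Euc m) := fun l =>
    {y | ENNReal.ofReal (t l) <
      weakNorm volume p1 fun x => (fun z => f (φ l) z - g z) (x, y)} with hB_def
  have hB : ∀ l, volume (B l) ≤ ENNReal.ofReal (t l) := by
    intro l
    refine cheb_le hp2 ?_ (hφN l)
    rw [iteratedWeakNorm]
    exact le_iSup₂ (f := fun (l' : ℝ) (_ : 0 < l') => ENNReal.ofReal l' *
      volume {y : Euc m | ENNReal.ofReal l' <
        weakNorm volume p1 fun x => (fun z => f (φ l) z - g z) (x, y)} ^ (1/p2)) (t l) (ht l)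
  have hBsum : ∑' l, volume (B l) ≠ ∞ :=
    ne_top_of_le_ne_top sum_half (ENNReal.tsum_le_tsum hB)
  have key : ∀ᵐ y : Euc m, ∀ j : ℕ, ∀ᵐ x : Euc n,
      ∀ᶠ l in atTop, |f (φ l) (x, y) - g (x, y)| ≤ 1 / ((j:ℝ) + 1) := by
    filter_upwards [ae_finite_setOf_mem hBsum] with y hy
    obtain ⟨L₀, hL₀⟩ := hy.bddAbove
    have hL : ∀ l, L₀ + 1 ≤ l →
        (weakNorm volume p1 fun x => (fun z => f (φ l) z - g z) (x, y)) ≤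
          ENNReal.ofReal (t l) := by
      intro l hl
      by_contra hcon
      push_neg at hcon
      exact absurd (hL₀ (show l ∈ {l | y ∈ B l} from hcon)) (by omega)
    intro j
    have he : (0:ℝ) < 1 / ((j:ℝ) + 1) := by positivity
    set e : ℝ := 1 / ((j:ℝ) + 1) with he_def
    set A : ℕ → Set (Euc n) := fun l =>
      {x | e < |f (φ (L₀ + 1 + l)) (x, y) - g (x, y)|} with hA_def
    have hA : ∀ l, volume (A l) ≤ ENNReal.ofReal ((t l / e) ^ p1) := by
      intro l
      have h1 : ENNReal.ofReal e * volume (A l) ^ (1/p1) ≤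
          weakNorm volume p1 fun x => (fun z => f (φ (L₀ + 1 + l)) z - g z) (x, y) := by
        rw [weakNorm]
        exact le_iSup₂ (f := fun (l' : ℝ) (_ : 0 < l') => ENNReal.ofReal l' *
          volume {x : Euc n | l' <
            |(fun z => f (φ (L₀ + 1 + l)) z - g z) (x, y)|} ^ (1/p1)) e he
      have h2 := h1.trans (hL (L₀ + 1 + l) (by omega))
      refine (cheb_ofReal hp1 he (ht _).le h2).trans (ENNReal.ofReal_le_ofReal ?_)
      have hmono : t (L₀ + 1 + l) ≤ t l :=
        pow_le_pow_of_le_one (by norm_num) (by norm_num) (by omega)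
      exact Real.rpow_le_rpow (by positivity) (by gcongr) hp1.le
    have hAsum : ∑' l, volume (A l) ≠ ∞ :=
      ne_top_of_le_ne_top (sum_aux hp1 he) (ENNReal.tsum_le_tsum hA)
    filter_upwards [ae_finite_setOf_mem hAsum] with x hx
    obtain ⟨M, hM⟩ := hx.bddAbove
    rw [eventually_atTop]
    refine ⟨L₀ + 1 + M + 1, fun l hl => ?_⟩
    have hnot : x ∉ A (l - (L₀ + 1)) := fun hmem => absurd (hM hmem) (by omega)
    have hidx : L₀ + 1 + (l - (L₀ + 1)) = l := by omega
    simp only [hA_def, mem_setOf_eq, hidx, not_lt] at hnot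
    exact hnot
  -- the good set
  set S : Set (Euc n × Euc m) := ⋂ (j : ℕ), ⋃ (N : ℕ), ⋂ (l : ℕ), ⋂ (_ : N ≤ l),
    {z : Euc n × Euc m | |f (φ l) z - g z| ≤ 1 / ((j:ℝ) + 1)} with hS_def
  have hSmeas : MeasurableSet S := by
    refine MeasurableSet.iInter fun j => MeasurableSet.iUnion fun N =>
      MeasurableSet.iInter fun l => MeasurableSet.iInter fun _ => ?_
    exact measurableSet_le ((hmeas (φ l)).sub hg).abs measurable_const
  have hS_iff : ∀ z, z ∈ S ↔ ∀ j : ℕ, ∃ N : ℕ, ∀ l, N ≤ l →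
      |f (φ l) z - g z| ≤ 1 / ((j:ℝ) + 1) := by
    intro z
    simp [hS_def, mem_iInter, mem_iUnion]
  have hslice : ∀ᵐ y : Euc m, volume ((fun x : Euc n => (x, y)) ⁻¹' Sᶜ) = 0 := by
    filter_upwards [key] with y hy
    have hx : ∀ᵐ x : Euc n, (x, y) ∈ S := by
      have := ae_all_iff.2 hy
      filter_upwards [this] with x hx
      rw [hS_iff]
      intro j
      exact eventually_atTop.1 (hx j)
    have := ae_iff.1 hx
    convert this using 2
    rfl
  have hScompl : volume Sᶜ = 0 := by
    rw [Measure.volume_eq_prod, Measure.prod_apply_symm hSmeas.compl]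
    rw [lintegral_congr_ae hslice, lintegral_zero]
  have hae : ∀ᵐ z : Euc n × Euc m, z ∈ S := by
    rw [ae_iff]
    exact hScompl
  filter_upwards [hae] with z hz
  rw [hS_iff] at hz
  rw [Metric.tendsto_atTop]
  intro ε hε
  obtain ⟨j, hj⟩ := exists_nat_one_div_lt hε
  obtain ⟨N, hN⟩ := hz j
  exact ⟨N, fun l hl => by rw [Real.dist_eq]; exact (hN l hl).trans_lt hj⟩
end
end

section
/- Completeness of the mixed weak space: let 0 < p1, p2 < ∞ and let {f_k : k ≥ 1} be a sequence of measurable functions on ℝ^n × ℝ^m that is Cauchy in the mixed weak norm, i.e. lim_{k,l→∞} ‖f_k − f_l‖_{L^{(p1,p2),∞}} = 0. Then there exists a measurable function f on ℝ^n × ℝ^m such that lim_{k→∞} ‖f_k − f‖_{L^{(p1,p2),∞}} = 0. -/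
open MeasureTheory ENNReal Filter Topology Set

noncomputable section

variable {n m : ℕ} {p1 p2 : ℝ}

lemma ind_rpow (hp1 : 0 < p1) (E : Set (Euc n × Euc m)) (z : Euc n × Euc m) :
    ENNReal.ofReal |E.indicator (fun _ => (1 : ℝ)) z| ^ p1
      = E.indicator (fun _ => (1 : ℝ≥0∞)) z := by
  by_cases hz : z ∈ E <;>
    simp [hz, Set.indicator_of_mem, Set.indicator_of_notMem,
      ENNReal.zero_rpow_of_pos hp1]

lemma mixedNorm_ind (hp1 : 0 < p1) (E : Set (Euc n × Euc m)) :
    mixedNorm p1 p2 (E.indicator fun _ => (1 : ℝ))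
      = (∫⁻ y : Euc m, (∫⁻ x : Euc n,
          E.indicator (fun _ => (1 : ℝ≥0∞)) (x, y)) ^ (p2 / p1)) ^ (1 / p2) := by
  unfold mixedNorm
  simp_rw [ind_rpow hp1]

lemma mixedNorm_ind_meas (hp1 : 0 < p1) {E : Set (Euc n × Euc m)} (hE : MeasurableSet E) :
    mixedNorm p1 p2 (E.indicator fun _ => (1 : ℝ))
      = (∫⁻ y : Euc m, (volume ((fun x => (x, y)) ⁻¹' E)) ^ (p2 / p1)) ^ (1 / p2) := by
  rw [mixedNorm_ind hp1]
  congr 1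
  refine lintegral_congr fun y => ?_
  congr 1
  have : (fun x : Euc n => E.indicator (fun _ => (1 : ℝ≥0∞)) (x, y))
      = ((fun x : Euc n => (x, y)) ⁻¹' E).indicator (fun _ => (1 : ℝ≥0∞)) := by
    funext x
    by_cases hx : (x, y) ∈ E <;> simp [hx, Set.indicator_of_mem, Set.indicator_of_notMem]
  rw [this]
  exact lintegral_indicator_one (measurable_prodMk_right hE)

lemma le_mixedWeakNorm (h : Euc n × Euc m → ℝ) {lam : ℝ} (hlam : 0 < lam) :
    ENNReal.ofReal lam *
      mixedNorm p1 p2 ({z | lam < |h z|}.indicator fun _ => (1 : ℝ))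
      ≤ mixedWeakNorm p1 p2 h :=
  le_iSup₂ (f := fun (l : ℝ) (_ : 0 < l) => ENNReal.ofReal l *
    mixedNorm p1 p2 ({z | l < |h z|}.indicator fun _ => (1 : ℝ))) lam hlam
-- liminf helpers
lemma my_le_liminf {u : ℕ → ℝ≥0∞} {c : ℝ≥0∞} (h : ∀ᶠ j in atTop, c ≤ u j) :
    c ≤ liminf u atTop := by
  rw [liminf_eq_iSup_iInf_of_nat]
  obtain ⟨N, hN⟩ := eventually_atTop.1 h
  exact le_iSup_of_le N (le_iInf₂ fun i hi => hN i hi)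

lemma my_liminf_le {u : ℕ → ℝ≥0∞} {c : ℝ≥0∞} (h : ∀ᶠ j in atTop, u j ≤ c) :
    liminf u atTop ≤ c := by
  rw [liminf_eq_iSup_iInf_of_nat]
  obtain ⟨N, hN⟩ := eventually_atTop.1 h
  refine iSup_le fun nn => ?_
  exact (iInf₂_le (max nn N) (le_max_left _ _)).trans (hN _ (le_max_right _ _))

lemma my_mul_liminf {u : ℕ → ℝ≥0∞} (c : ℝ≥0∞) :
    c * liminf u atTop ≤ liminf (fun j => c * u j) atTop := by
  rw [liminf_eq_iSup_iInf_of_nat, liminf_eq_iSup_iInf_of_nat, ENNReal.mul_iSup]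
  refine iSup_mono fun nn => ?_
  exact le_iInf₂ fun i hi => mul_le_mul_right (iInf₂_le i hi) c

lemma my_liminf_rpow (u : ℕ → ℝ≥0∞) {c : ℝ} (hc : 0 < c) :
    liminf u atTop ^ c = liminf (fun j => u j ^ c) atTop := by
  have := (ENNReal.orderIsoRpow c hc).liminf_apply (u := u) (f := atTop)
  simpa [ENNReal.orderIsoRpow, StrictMono.orderIsoOfRightInverse] using this

-- ae on slices (second coordinate)
lemma my_ae_ae {α β : Type*} [MeasurableSpace α] [MeasurableSpace β]
    {μ : Measure α} {ν : Measure β} [SFinite μ] [SFinite ν] {p : α × β → Prop}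
    (h : ∀ᵐ z ∂μ.prod ν, p z) : ∀ᵐ y ∂ν, ∀ᵐ x ∂μ, p (x, y) := by
  rw [ae_iff] at h
  obtain ⟨T, hsub, hTm, hT0⟩ := exists_measurable_superset_of_null h
  have h1 : ∫⁻ y, μ ((fun x => (x, y)) ⁻¹' T) ∂ν = 0 := by
    rw [← Measure.prod_apply_symm hTm, hT0]
  have h2 := (lintegral_eq_zero_iff (measurable_measure_prodMk_right hTm)).1 h1
  filter_upwards [h2] with y hy
  rw [ae_iff]
  exact measure_mono_null (fun x hx => hsub hx) hy

lemma fatou_mwn (hp1 : 0 < p1) (hp2 : 0 < p2) {h : Euc n × Euc m → ℝ}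
    {u : ℕ → Euc n × Euc m → ℝ} (hu : ∀ j, Measurable (u j))
    (hae : ∀ᵐ z : Euc n × Euc m, Tendsto (fun j => u j z) atTop (𝓝 (h z))) :
    mixedWeakNorm p1 p2 h ≤ liminf (fun j => mixedWeakNorm p1 p2 (u j)) atTop := by
  have hc : 0 < p2 / p1 := div_pos hp2 hp1
  have hinv : 0 < 1 / p2 := by positivity
  unfold mixedWeakNorm
  refine iSup_le fun lam => iSup_le fun hlam => ?_
  set Φ : Set (Euc n × Euc m) → Euc n × Euc m → ℝ≥0∞ :=
    fun S => S.indicator fun _ => 1 with hΦ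
  have hEj : ∀ j, MeasurableSet {z | lam < |u j z|} := fun j =>
    measurableSet_lt measurable_const (hu j).abs
  have hmeasΦ : ∀ j, Measurable (Φ {z | lam < |u j z|}) := fun j =>
    measurable_const.indicator (hEj j)
  have hae2 : ∀ᵐ y : Euc m, ∀ᵐ x : Euc n,
      Tendsto (fun j => u j (x, y)) atTop (𝓝 (h (x, y))) := by
    rw [Measure.volume_eq_prod] at hae
    exact my_ae_ae hae
  have step_y : ∀ᵐ y : Euc m, (∫⁻ x : Euc n, Φ {z | lam < |h z|} (x, y)) ^ (p2 / p1)
      ≤ liminf (fun j =>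
          (∫⁻ x : Euc n, Φ {z | lam < |u j z|} (x, y)) ^ (p2 / p1)) atTop := by
    filter_upwards [hae2] with y hy
    rw [← my_liminf_rpow _ hc]
    refine ENNReal.rpow_le_rpow ?_ hc.le
    calc ∫⁻ x : Euc n, Φ {z | lam < |h z|} (x, y)
        ≤ ∫⁻ x : Euc n, liminf (fun j => Φ {z | lam < |u j z|} (x, y)) atTop := by
          refine lintegral_mono_ae ?_
          filter_upwards [hy] with x hx
          by_cases hxE : lam < |h (x, y)|
          · have hev : ∀ᶠ j in atTop, lam < |u j (x, y)| :=
              hx.abs.eventually_const_lt hxE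
            have h1 : Φ {z | lam < |h z|} (x, y) = 1 :=
              Set.indicator_of_mem (show (x, y) ∈ {z | lam < |h z|} from hxE) _
            rw [h1]
            refine my_le_liminf ?_
            filter_upwards [hev] with j hj
            rw [hΦ]
            simp [Set.indicator_of_mem, hj]
          · rw [hΦ]
            simp only [Set.indicator_of_notMem, hxE, Set.mem_setOf_eq,
              not_false_iff]
            exact zero_le
      _ ≤ liminf (fun j => ∫⁻ x : Euc n, Φ {z | lam < |u j z|} (x, y)) atTop :=
          lintegral_liminf_le fun j => (hmeasΦ j).comp measurable_prodMk_right
  have meas_j : ∀ j, Measurable fun y : Euc m =>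
      (∫⁻ x : Euc n, Φ {z | lam < |u j z|} (x, y)) ^ (p2 / p1) := fun j =>
    ENNReal.continuous_rpow_const.measurable.comp (hmeasΦ j).lintegral_prod_left'
  have step_final : (∫⁻ y : Euc m,
        (∫⁻ x : Euc n, Φ {z | lam < |h z|} (x, y)) ^ (p2 / p1))
      ≤ liminf (fun j => ∫⁻ y : Euc m,
          (∫⁻ x : Euc n, Φ {z | lam < |u j z|} (x, y)) ^ (p2 / p1)) atTop :=
    (lintegral_mono_ae step_y).trans (lintegral_liminf_le meas_j)
  have key : mixedNorm p1 p2 ({z | lam < |h z|}.indicator fun _ => (1 : ℝ))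
      ≤ liminf (fun j =>
          mixedNorm p1 p2 ({z | lam < |u j z|}.indicator fun _ => (1 : ℝ))) atTop := by
    rw [mixedNorm_ind hp1]
    calc (∫⁻ y : Euc m,
          (∫⁻ x : Euc n, Φ {z | lam < |h z|} (x, y)) ^ (p2 / p1)) ^ (1 / p2)
        ≤ (liminf (fun j => ∫⁻ y : Euc m,
            (∫⁻ x : Euc n, Φ {z | lam < |u j z|} (x, y)) ^ (p2 / p1)) atTop) ^ (1 / p2) :=
          ENNReal.rpow_le_rpow step_final hinv.le
      _ = liminf (fun j => (∫⁻ y : Euc m,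
            (∫⁻ x : Euc n, Φ {z | lam < |u j z|} (x, y)) ^ (p2 / p1)) ^ (1 / p2)) atTop :=
          my_liminf_rpow _ hinv
      _ = liminf (fun j =>
            mixedNorm p1 p2 ({z | lam < |u j z|}.indicator fun _ => (1 : ℝ))) atTop := by
          refine liminf_congr (Eventually.of_forall fun j => ?_)
          rw [mixedNorm_ind hp1]
  calc ENNReal.ofReal lam *
        mixedNorm p1 p2 ({z | lam < |h z|}.indicator fun _ => (1 : ℝ))
      ≤ ENNReal.ofReal lam * liminf (fun j =>
          mixedNorm p1 p2 ({z | lam < |u j z|}.indicator fun _ => (1 : ℝ))) atTop :=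
        mul_le_mul_right key _
    _ ≤ liminf (fun j => ENNReal.ofReal lam *
          mixedNorm p1 p2 ({z | lam < |u j z|}.indicator fun _ => (1 : ℝ))) atTop :=
        my_mul_liminf _
    _ ≤ liminf (fun j => mixedWeakNorm p1 p2 (u j)) atTop :=
        liminf_le_liminf (Eventually.of_forall fun j => le_mixedWeakNorm (u j) hlam)

lemma levelSmall (hp1 : 0 < p1) (hp2 : 0 < p2) {ε : ℝ≥0∞} (hε : 0 < ε)
    {lam : ℝ} (hlam : 0 < lam) (R : ℝ) :
    ∃ δ : ℝ≥0∞, 0 < δ ∧ ∀ h : Euc n × Euc m → ℝ, Measurable h →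
      mixedWeakNorm p1 p2 h < δ →
      volume ({z | lam < |h z|} ∩
        (Metric.closedBall (0 : Euc n) R ×ˢ Metric.closedBall (0 : Euc m) R)) < ε := by
  have hc : 0 < p2 / p1 := div_pos hp2 hp1
  set ε' : ℝ≥0∞ := min (ε / 2) 1 with hε'def
  have hε'0 : ε' ≠ 0 :=
    (lt_min (ENNReal.half_pos hε.ne') zero_lt_one).ne'
  have hε'top : ε' ≠ ⊤ :=
    ne_top_of_le_ne_top ENNReal.one_ne_top (min_le_right _ _)
  have hε'ε : ε' < ε := by
    rcases eq_or_ne ε ⊤ with rfl | hne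
    · exact lt_of_le_of_lt (min_le_right _ _) (by simp)
    · exact lt_of_le_of_lt (min_le_left _ _) (ENNReal.half_lt_self hε.ne' hne)
  set Bn : ℝ≥0∞ := volume (Metric.closedBall (0 : Euc n) R) with hBn
  set Bm : ℝ≥0∞ := volume (Metric.closedBall (0 : Euc m) R) with hBm
  have hBnt : Bn ≠ ⊤ := measure_closedBall_lt_top.ne
  have hBmt : Bm ≠ ⊤ := measure_closedBall_lt_top.ne
  set t : ℝ≥0∞ := ε' / 2 / (Bm + 1) with ht
  have ht0 : t ≠ 0 := by
    rw [ht]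
    simp [ENNReal.div_eq_zero_iff, hε'0, hε'top, ENNReal.add_eq_top, hBmt]
  have hBn10 : Bn + 1 ≠ 0 := (lt_of_lt_of_le zero_lt_one le_add_self).ne'
  have hBn1t : Bn + 1 ≠ ⊤ := ENNReal.add_ne_top.2 ⟨hBnt, ENNReal.one_ne_top⟩
  have hBm10 : Bm + 1 ≠ 0 := (lt_of_lt_of_le zero_lt_one le_add_self).ne'
  have hBm1t : Bm + 1 ≠ ⊤ := ENNReal.add_ne_top.2 ⟨hBmt, ENNReal.one_ne_top⟩
  have httop : t ≠ ⊤ := by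
    rw [ht]
    exact (ENNReal.div_lt_top (ENNReal.div_lt_top hε'top (by norm_num)).ne hBm10).ne
  set tc : ℝ≥0∞ := t ^ (p2 / p1) with htc
  have htc0 : tc ≠ 0 := (ENNReal.rpow_pos (pos_iff_ne_zero.2 ht0) httop).ne'
  have htctop : tc ≠ ⊤ := ENNReal.rpow_ne_top_of_nonneg hc.le httop
  set A : ℝ≥0∞ := ε' / 2 / (Bn + 1) * tc with hA
  have hA0 : A ≠ 0 := by
    rw [hA]
    refine mul_ne_zero ?_ htc0
    simp [ENNReal.div_eq_zero_iff, hε'0, hε'top, ENNReal.add_eq_top, hBnt]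
  refine ⟨ENNReal.ofReal lam * A ^ (1 / p2), ?_, ?_⟩
  · exact ENNReal.mul_pos (ENNReal.ofReal_pos.2 hlam).ne'
      (ENNReal.rpow_pos (pos_iff_ne_zero.2 hA0)
        (ENNReal.mul_ne_top
          (ENNReal.div_lt_top (ENNReal.div_lt_top hε'top (by norm_num)).ne hBn10).ne
          htctop)).ne'
  intro h hmeas hD
  set E : Set (Euc n × Euc m) := {z | lam < |h z|} with hE
  have hEm : MeasurableSet E := measurableSet_lt measurable_const hmeas.abs
  set s : Euc m → ℝ≥0∞ := fun y => volume ((fun x : Euc n => (x, y)) ⁻¹' E) with hs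
  have hsm : Measurable s := measurable_measure_prodMk_right hEm
  -- step 1: integral bound
  have step1 : (∫⁻ y : Euc m, s y ^ (p2 / p1)) ^ (1 / p2) < A ^ (1 / p2) := by
    have h1 : ENNReal.ofReal lam *
        mixedNorm p1 p2 (E.indicator fun _ => (1 : ℝ)) < ENNReal.ofReal lam * A ^ (1 / p2) :=
      lt_of_le_of_lt (le_mixedWeakNorm h hlam) hD
    have h2 := (ENNReal.mul_lt_mul_iff_right (ENNReal.ofReal_pos.2 hlam).ne'
      ENNReal.ofReal_ne_top).1 h1
    rwa [mixedNorm_ind_meas hp1 hEm] at h2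
  have step2 : (∫⁻ y : Euc m, s y ^ (p2 / p1)) ≤ A := by
    by_contra hcon
    push_neg at hcon
    exact absurd (ENNReal.rpow_le_rpow hcon.le (by positivity : (0:ℝ) ≤ 1 / p2))
      (not_le.2 step1)
  -- Chebyshev
  set S : Set (Euc m) := {y | t < s y} with hS
  have hSm : MeasurableSet S := measurableSet_lt measurable_const hsm
  have cheb : volume S ≤ ε' / 2 / (Bn + 1) := by
    have h1 : tc * volume {y : Euc m | tc ≤ s y ^ (p2 / p1)} ≤
        ∫⁻ y : Euc m, s y ^ (p2 / p1) :=
      mul_meas_ge_le_lintegral₀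
        (ENNReal.continuous_rpow_const.measurable.comp hsm).aemeasurable tc
    have h2 : volume S ≤ volume {y : Euc m | tc ≤ s y ^ (p2 / p1)} := by
      refine measure_mono fun y hy => ?_
      exact ENNReal.rpow_le_rpow (le_of_lt hy) hc.le
    have h3 : tc * volume S ≤ A := le_trans (mul_le_mul_right h2 tc) (h1.trans step2)
    rw [hA, mul_comm (ε' / 2 / (Bn + 1)) tc] at h3
    exact (ENNReal.mul_le_mul_iff_right htc0 htctop).1 h3
  -- decompose the measure
  have hQm : MeasurableSet
      (Metric.closedBall (0 : Euc n) R ×ˢ Metric.closedBall (0 : Euc m) R) :=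
    measurableSet_closedBall.prod measurableSet_closedBall
  have hprod : volume (E ∩
      (Metric.closedBall (0 : Euc n) R ×ˢ Metric.closedBall (0 : Euc m) R))
      = ∫⁻ y : Euc m, volume ((fun x : Euc n => (x, y)) ⁻¹' (E ∩
          (Metric.closedBall (0 : Euc n) R ×ˢ Metric.closedBall (0 : Euc m) R))) := by
    rw [Measure.volume_eq_prod, Measure.prod_apply_symm (hEm.inter hQm)]
  have hbound : ∀ y : Euc m, volume ((fun x : Euc n => (x, y)) ⁻¹' (E ∩
        (Metric.closedBall (0 : Euc n) R ×ˢ Metric.closedBall (0 : Euc m) R)))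
      ≤ S.indicator (fun _ => Bn) y +
        (Metric.closedBall (0 : Euc m) R).indicator (fun _ => t) y := by
    intro y
    by_cases hyS : y ∈ S
    · refine le_trans ?_ le_self_add
      rw [Set.indicator_of_mem hyS]
      refine measure_mono fun x hx => ?_
      exact (Set.mem_prod.1 (Set.mem_preimage.1 hx).2).1
    · by_cases hyB : y ∈ Metric.closedBall (0 : Euc m) R
      · refine le_trans ?_ le_add_self
        rw [Set.indicator_of_mem hyB]
        refine le_trans (measure_mono (Set.preimage_mono Set.inter_subset_left)) ?_
        exact not_lt.1 hyS
      · have : ((fun x : Euc n => (x, y)) ⁻¹' (E ∩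
            (Metric.closedBall (0 : Euc n) R ×ˢ Metric.closedBall (0 : Euc m) R))) = ∅ := by
          ext x
          simp only [Set.mem_preimage, Set.mem_inter_iff, Set.mem_prod, Set.mem_empty_iff_false,
            iff_false, not_and]
          exact fun _ _ hy => hyB hy
        rw [this]
        simp
  calc volume (E ∩ (Metric.closedBall (0 : Euc n) R ×ˢ Metric.closedBall (0 : Euc m) R))
      ≤ ∫⁻ y : Euc m, (S.indicator (fun _ => Bn) y +
          (Metric.closedBall (0 : Euc m) R).indicator (fun _ => t) y) := by
        rw [hprod]; exact lintegral_mono hbound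
    _ = Bn * volume S + t * Bm := by
        rw [lintegral_add_left (measurable_const.indicator hSm),
          lintegral_indicator_const hSm, lintegral_indicator_const measurableSet_closedBall]
    _ ≤ ε' / 2 + ε' / 2 := by
        refine add_le_add ?_ ?_
        · calc Bn * volume S ≤ (Bn + 1) * (ε' / 2 / (Bn + 1)) :=
              mul_le_mul' le_self_add cheb
            _ = ε' / 2 := ENNReal.mul_div_cancel hBn10 hBn1t
        · calc t * Bm ≤ t * (Bm + 1) := mul_le_mul_right le_self_add t
            _ = ε' / 2 := by rw [ht, ENNReal.div_mul_cancel hBm10 hBm1t]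
    _ = ε' := ENNReal.add_halves ε'
    _ < ε := hε'ε

/-- Completeness of `L^{(p1,p2),∞}`: every sequence of measurable functions on
`ℝ^n × ℝ^m` that is Cauchy in the mixed weak norm converges in the mixed weak norm to some
measurable function `g`. -/
theorem stmt10 (n m : ℕ) (p1 p2 : ℝ) (hp1 : 0 < p1) (hp2 : 0 < p2)
    (f : ℕ → Euc n × Euc m → ℝ) (hmeas : ∀ k, Measurable (f k))
    (hcauchy : ∀ ε : ℝ≥0∞, 0 < ε → ∃ N : ℕ, ∀ k ≥ N, ∀ l ≥ N,
      mixedWeakNorm p1 p2 (fun z => f k z - f l z) < ε) :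
    ∃ g : Euc n × Euc m → ℝ, Measurable g ∧
      Tendsto (fun k => mixedWeakNorm p1 p2 (fun z => f k z - g z)) atTop (𝓝 0) := by
  classical
  have hδ : ∀ j : ℕ, ∃ δ : ℝ≥0∞, 0 < δ ∧ ∀ h : Euc n × Euc m → ℝ, Measurable h →
      mixedWeakNorm p1 p2 h < δ →
      volume ({z | (1/2 : ℝ)^j < |h z|} ∩
        (Metric.closedBall (0 : Euc n) j ×ˢ Metric.closedBall (0 : Euc m) j))
        < (2⁻¹ : ℝ≥0∞) ^ j :=
    fun j => levelSmall hp1 hp2 (ENNReal.pow_pos (by norm_num) j) (by positivity) (j : ℝ)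
  choose δ hδpos hδ using hδ
  have hNs : ∀ j : ℕ, ∃ N : ℕ, ∀ k ≥ N, ∀ l ≥ N,
      mixedWeakNorm p1 p2 (fun z => f k z - f l z) < δ j :=
    fun j => hcauchy (δ j) (hδpos j)
  choose N hN using hNs
  set K : ℕ → ℕ := fun j => Nat.rec (N 0) (fun j ih => max (N (j + 1)) (ih + 1)) j with hK
  have hKsucc : ∀ j, K (j + 1) = max (N (j + 1)) (K j + 1) := fun j => rfl
  have hKmono : StrictMono K := strictMono_nat_of_lt_succ fun j => by
    rw [hKsucc]
    exact lt_of_lt_of_le (Nat.lt_succ_self _) (le_max_right _ _)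
  have hKN : ∀ j, N j ≤ K j := fun j => by
    cases j with
    | zero => exact le_refl _
    | succ i => rw [hKsucc]; exact le_max_left _ _
  have hdiff : ∀ j, mixedWeakNorm p1 p2 (fun z => f (K (j + 1)) z - f (K j) z) < δ j :=
    fun j => hN j _ (le_trans (hKN j) (hKmono.monotone (Nat.le_succ j))) _ (hKN j)
  set A : ℕ → Set (Euc n × Euc m) := fun j =>
    {z | (1/2 : ℝ)^j < |f (K (j + 1)) z - f (K j) z|} ∩
      (Metric.closedBall (0 : Euc n) j ×ˢ Metric.closedBall (0 : Euc m) j) with hA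
  have hAvol : ∀ j, volume (A j) < (2⁻¹ : ℝ≥0∞) ^ j :=
    fun j => hδ j _ ((hmeas _).sub (hmeas _)) (hdiff j)
  have hsum : ∑' j, volume (A j) ≠ ⊤ := by
    refine ne_top_of_le_ne_top ?_ (ENNReal.tsum_le_tsum fun j => (hAvol j).le)
    rw [ENNReal.tsum_geometric, ENNReal.one_sub_inv_two]
    simp
  have hBC : volume (limsup A atTop) = 0 := measure_limsup_atTop_eq_zero hsum
  have hconv : ∀ᵐ z : Euc n × Euc m, ∃ L : ℝ,
      Tendsto (fun j => f (K j) z) atTop (𝓝 L) := by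
    have h0 : ∀ᵐ z : Euc n × Euc m, z ∉ limsup A atTop := by
      rw [ae_iff]
      refine measure_mono_null ?_ hBC
      intro z hz
      simpa using hz
    filter_upwards [h0] with z hz
    rw [mem_limsup_iff_frequently_mem, not_frequently] at hz
    have hball : ∀ᶠ j : ℕ in atTop,
        z ∈ (Metric.closedBall (0 : Euc n) j ×ˢ Metric.closedBall (0 : Euc m) j) := by
      filter_upwards [eventually_ge_atTop ⌈max ‖z.1‖ ‖z.2‖⌉₊] with j hj
      have hj' : max ‖z.1‖ ‖z.2‖ ≤ (j : ℝ) :=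
        (Nat.le_ceil _).trans (Nat.cast_le.2 hj)
      refine Set.mem_prod.2 ⟨?_, ?_⟩
      · rw [Metric.mem_closedBall, dist_zero_right]
        exact le_trans (le_max_left _ _) hj'
      · rw [Metric.mem_closedBall, dist_zero_right]
        exact le_trans (le_max_right _ _) hj'
    have hev : ∀ᶠ j : ℕ in atTop,
        |f (K (j + 1)) z - f (K j) z| ≤ (1/2 : ℝ)^j := by
      filter_upwards [hz, hball] with j hj1 hj2
      by_contra hcon
      push_neg at hcon
      exact hj1 ⟨hcon, hj2⟩
    obtain ⟨J, hJ⟩ := eventually_atTop.1 hev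
    have hsum2 : Summable fun j => dist (f (K j) z) (f (K (j + 1)) z) := by
      rw [← summable_nat_add_iff J]
      have hmaj : Summable fun i : ℕ => (1/2 : ℝ) ^ (i + J) := by
        have h1 : Summable fun i : ℕ => (1/2 : ℝ) ^ i * (1/2 : ℝ) ^ J :=
          (summable_geometric_of_lt_one (by norm_num) (by norm_num)).mul_right _
        exact h1.congr fun i => (pow_add (1/2 : ℝ) i J).symm
      refine Summable.of_nonneg_of_le (fun i => dist_nonneg) (fun i => ?_) hmaj
      rw [Real.dist_eq, abs_sub_comm]
      exact hJ (i + J) (Nat.le_add_left J i)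
    exact cauchySeq_tendsto_of_complete (cauchySeq_of_summable_dist hsum2)
  obtain ⟨g, hgmeas, hgtend⟩ := measurable_limit_of_tendsto_metrizable_ae
    (fun j => (hmeas (K j)).aemeasurable) hconv
  refine ⟨g, hgmeas, ?_⟩
  rw [ENNReal.tendsto_nhds_zero]
  intro ε hε
  obtain ⟨Nf, hNf⟩ := hcauchy ε hε
  rw [eventually_atTop]
  refine ⟨Nf, fun a ha => ?_⟩
  have hfat : mixedWeakNorm p1 p2 (fun z => f a z - g z) ≤
      liminf (fun j => mixedWeakNorm p1 p2 (fun z => f a z - f (K j) z)) atTop := by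
    refine fatou_mwn hp1 hp2 (fun j => (hmeas a).sub (hmeas (K j))) ?_
    filter_upwards [hgtend] with z hz
    exact tendsto_const_nhds.sub hz
  refine hfat.trans (my_liminf_le ?_)
  filter_upwards [eventually_ge_atTop Nf] with j hj
  exact (hNf a ha (K j) (le_trans hj (le_trans (hKmono.le_apply) (le_refl _)))).le
end
end

section
/- Characterization of convergence in truncated norm: let 0 < p1, p2 < ∞ and let {f_k : k ≥ 1} be a sequence of measurable functions on ℝ^n × ℝ^m. Then there exists a measurable function f such that f_k → f in truncated L^{(p1,p2)} norm (i.e. for every λ > 0, ‖χ_{{|f_k − f| > λ}}‖_{L^{(p1,p2)}} → 0 as k → ∞) if and only if {f_k} is Cauchy in truncated norm, i.e. for every λ > 0, ‖χ_{{|f_k − f_l| > λ}}‖_{L^{(p1,p2)}} → 0 as k, l → ∞. -/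
open MeasureTheory ENNReal Filter Topology Set

noncomputable section

namespace St12

def Phi (n m : ℕ) (p1 p2 : ℝ) (E : Set (Euc n × Euc m)) : ℝ≥0∞ :=
  (∫⁻ y : Euc m, (volume {x : Euc n | (x, y) ∈ E}) ^ (p2 / p1)) ^ (1 / p2)

variable {n m : ℕ} {p1 p2 : ℝ}

lemma rpow_add_le (a b : ℝ≥0∞) {c : ℝ} (hc : 0 ≤ c) :
    (a + b) ^ c ≤ 2 ^ c * (a ^ c + b ^ c) := by
  calc (a + b) ^ c ≤ (2 * (a ⊔ b)) ^ c := by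
        apply ENNReal.rpow_le_rpow _ hc
        rw [two_mul]
        exact add_le_add le_sup_left le_sup_right
    _ = 2 ^ c * (a ⊔ b) ^ c := ENNReal.mul_rpow_of_nonneg _ _ hc
    _ ≤ 2 ^ c * (a ^ c + b ^ c) := by
        gcongr
        rcases le_total a b with h | h
        · rw [sup_eq_right.2 h]; exact le_add_self
        · rw [sup_eq_left.2 h]; exact self_le_add_right _ _

lemma Phi_mono (hp1 : 0 < p1) (hp2 : 0 < p2) {E F : Set (Euc n × Euc m)} (h : E ⊆ F) :
    Phi n m p1 p2 E ≤ Phi n m p1 p2 F := by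
  apply ENNReal.rpow_le_rpow _ (by positivity)
  apply lintegral_mono fun y => ?_
  apply ENNReal.rpow_le_rpow _ (by positivity)
  exact measure_mono fun x hx => h hx

lemma Phi_null (hp1 : 0 < p1) (hp2 : 0 < p2) {E : Set (Euc n × Euc m)}
    (h : volume E = 0) : Phi n m p1 p2 E = 0 := by
  obtain ⟨E', hsub, hE', h0⟩ := exists_measurable_superset_of_null h
  refine le_antisymm (le_trans (Phi_mono hp1 hp2 hsub) ?_) zero_le
  have hD : MeasurableSet (Prod.swap ⁻¹' E' : Set (Euc m × Euc n)) := measurable_swap hE'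
  have h1 : ((volume : Measure (Euc m)).prod (volume : Measure (Euc n)))
      (Prod.swap ⁻¹' E') = 0 := by
    rw [← Measure.prod_swap, Measure.map_apply measurable_swap hD]
    simpa [Set.preimage_preimage, ← Measure.volume_eq_prod] using h0
  have hae := (Measure.measure_prod_null hD).mp h1
  have : (fun y : Euc m => (volume {x : Euc n | (x, y) ∈ E'}) ^ (p2 / p1))
      =ᵐ[volume] 0 := by
    filter_upwards [hae] with y hy
    have : volume {x : Euc n | (x, y) ∈ E'} = 0 := by exact hy
    simp [this, ENNReal.zero_rpow_of_pos (div_pos hp2 hp1)]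
  rw [Phi, lintegral_congr_ae this]
  simp only [Pi.zero_apply, lintegral_zero]
  exact le_of_eq (ENNReal.zero_rpow_of_pos (by positivity))

/-- the quasi-triangle constant -/
def C12 (p1 p2 : ℝ) : ℝ≥0∞ := 2 ^ ((p2 / p1) / p2) * 2 ^ (1 / p2)

lemma C12_ne_top (hp1 : 0 < p1) (hp2 : 0 < p2) : C12 p1 p2 ≠ ∞ := by
  apply ENNReal.mul_ne_top <;>
    exact ENNReal.rpow_ne_top_of_nonneg (by positivity) (by norm_num)

lemma C12_ne_zero (hp1 : 0 < p1) (hp2 : 0 < p2) : C12 p1 p2 ≠ 0 := by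
  simp only [C12, mul_ne_zero_iff]
  constructor <;> · simp [ENNReal.rpow_eq_zero_iff]

lemma Phi_union (hp1 : 0 < p1) (hp2 : 0 < p2) {E F : Set (Euc n × Euc m)}
    (hE : MeasurableSet E) (hF : MeasurableSet F) :
    Phi n m p1 p2 (E ∪ F) ≤ C12 p1 p2 * (Phi n m p1 p2 E + Phi n m p1 p2 F) := by
  have hq : (0:ℝ) < p2 / p1 := div_pos hp2 hp1
  set q := p2 / p1 with hqdef
  have hvE : Measurable fun y : Euc m => volume {x : Euc n | (x, y) ∈ E} :=
    measurable_measure_prodMk_right hE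
  have hvF : Measurable fun y : Euc m => volume {x : Euc n | (x, y) ∈ F} :=
    measurable_measure_prodMk_right hF
  have step1 : ∀ y : Euc m, (volume {x : Euc n | (x, y) ∈ E ∪ F}) ^ q ≤
      2 ^ q * ((volume {x : Euc n | (x, y) ∈ E}) ^ q +
        (volume {x : Euc n | (x, y) ∈ F}) ^ q) := by
    intro y
    refine le_trans (ENNReal.rpow_le_rpow ?_ hq.le) (rpow_add_le _ _ hq.le)
    have : {x : Euc n | (x, y) ∈ E ∪ F} =
        {x : Euc n | (x, y) ∈ E} ∪ {x : Euc n | (x, y) ∈ F} := rfl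
    rw [this]
    exact measure_union_le _ _
  have step2 : (∫⁻ y : Euc m, (volume {x : Euc n | (x, y) ∈ E ∪ F}) ^ q) ≤
      2 ^ q * ((∫⁻ y, (volume {x : Euc n | (x, y) ∈ E}) ^ q) +
        (∫⁻ y, (volume {x : Euc n | (x, y) ∈ F}) ^ q)) := by
    calc _ ≤ ∫⁻ y : Euc m, 2 ^ q * ((volume {x : Euc n | (x, y) ∈ E}) ^ q +
          (volume {x : Euc n | (x, y) ∈ F}) ^ q) := lintegral_mono step1
      _ = _ := by
          rw [lintegral_const_mul' _ _ (by simp : (2:ℝ≥0∞) ^ q ≠ ∞),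
            lintegral_add_left (hvE.pow_const q)]
  set X := ∫⁻ y : Euc m, (volume {x : Euc n | (x, y) ∈ E}) ^ q with hX
  set Y := ∫⁻ y : Euc m, (volume {x : Euc n | (x, y) ∈ F}) ^ q with hY
  calc Phi n m p1 p2 (E ∪ F) ≤ (2 ^ q * (X + Y)) ^ (1/p2) :=
      ENNReal.rpow_le_rpow step2 (by positivity)
    _ = (2 ^ q) ^ (1/p2) * (X + Y) ^ (1/p2) :=
      ENNReal.mul_rpow_of_nonneg _ _ (by positivity)
    _ ≤ (2 ^ q) ^ (1/p2) * (2 ^ (1/p2) * (X ^ (1/p2) + Y ^ (1/p2))) := by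
      exact mul_le_mul_right (rpow_add_le _ _ (by positivity)) _
    _ = C12 p1 p2 * (Phi n m p1 p2 E + Phi n m p1 p2 F) := by
      rw [C12, ← ENNReal.rpow_mul, mul_one_div, mul_assoc]
      rfl


lemma mixedNorm_eq_Phi (hp1 : 0 < p1) {E : Set (Euc n × Euc m)} (hE : MeasurableSet E) :
    mixedNorm p1 p2 (E.indicator fun _ => (1:ℝ)) = Phi n m p1 p2 E := by
  rw [mixedNorm, Phi]
  congr 1
  apply lintegral_congr fun y => ?_
  congr 1
  have h1 : ∀ x : Euc n, ENNReal.ofReal |E.indicator (fun _ => (1:ℝ)) (x, y)| ^ p1 =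
      ({x : Euc n | (x, y) ∈ E}).indicator (fun _ => (1:ℝ≥0∞)) x := by
    intro x
    by_cases h : (x, y) ∈ E
    · simp [Set.indicator_of_mem h, Set.indicator_of_mem (show x ∈ {x : Euc n | (x,y) ∈ E} from h)]
    · simp [Set.indicator_of_notMem h,
        Set.indicator_of_notMem (show x ∉ {x : Euc n | (x,y) ∈ E} from h),
        ENNReal.zero_rpow_of_pos hp1]
  rw [lintegral_congr h1]
  exact lintegral_indicator_one (measurable_prodMk_right hE)

lemma measure_eventually_le_liminf {α : Type*} [MeasurableSpace α] (μ : Measure α)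
    (s : ℕ → Set α) :
    μ {x | ∀ᶠ j in atTop, x ∈ s j} ≤ atTop.liminf fun j => μ (s j) := by
  have hset : {x | ∀ᶠ j in atTop, x ∈ s j} = ⋃ N, ⋂ j, ⋂ (_ : N ≤ j), s j := by
    ext x; simp [eventually_atTop]
  have hdir : Directed (· ⊆ ·) fun N => ⋂ j, ⋂ (_ : N ≤ j), s j := by
    apply Monotone.directed_le
    intro a b hab
    exact fun x hx => Set.mem_iInter₂.2 fun j hj => Set.mem_iInter₂.1 hx j (le_trans hab hj)
  rw [hset, hdir.measure_iUnion, liminf_eq_iSup_iInf_of_nat]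
  apply iSup_mono fun N => ?_
  exact le_iInf₂ fun j hj => measure_mono (Set.iInter₂_subset j hj)

lemma Phi_liminf (hp1 : 0 < p1) (hp2 : 0 < p2) {E : Set (Euc n × Euc m)}
    {Ej : ℕ → Set (Euc n × Euc m)} (hEj : ∀ j, MeasurableSet (Ej j))
    (h : ∀ z ∈ E, ∀ᶠ j in atTop, z ∈ Ej j) :
    Phi n m p1 p2 E ≤ atTop.liminf fun j => Phi n m p1 p2 (Ej j) := by
  have hq : (0:ℝ) < p2 / p1 := div_pos hp2 hp1
  set q := p2 / p1
  have hrpow : ∀ (u : ℕ → ℝ≥0∞) (c : ℝ) (hc : (0:ℝ) < c),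
      (atTop.liminf u) ^ c = atTop.liminf (fun j => u j ^ c) := by
    intro u c hc
    have := OrderIso.liminf_apply (ENNReal.orderIsoRpow c hc) (f := atTop) (u := u)
    simpa [ENNReal.orderIsoRpow_apply] using this
  have hv : ∀ j, Measurable fun y : Euc m => volume {x : Euc n | (x, y) ∈ Ej j} :=
    fun j => measurable_measure_prodMk_right (hEj j)
  have step1 : ∀ y : Euc m, volume {x : Euc n | (x, y) ∈ E} ≤
      atTop.liminf fun j => volume {x : Euc n | (x, y) ∈ Ej j} := by
    intro y
    refine le_trans (measure_mono ?_) (measure_eventually_le_liminf volume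
      (fun j => {x : Euc n | (x, y) ∈ Ej j}))
    intro x hx
    exact h _ hx
  have step2 : Phi n m p1 p2 E ≤
      (∫⁻ y : Euc m, atTop.liminf fun j => (volume {x : Euc n | (x, y) ∈ Ej j}) ^ q) ^ (1/p2) := by
    apply ENNReal.rpow_le_rpow _ (by positivity)
    apply lintegral_mono fun y => ?_
    rw [← hrpow _ _ hq]
    exact ENNReal.rpow_le_rpow (step1 y) hq.le
  refine le_trans step2 ?_
  have step3 := lintegral_liminf_le (μ := (volume : Measure (Euc m))) (u := atTop)
    (f := fun j y => (volume {x : Euc n | (x, y) ∈ Ej j}) ^ q)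
    (fun j => (hv j).pow_const q)
  refine le_trans (ENNReal.rpow_le_rpow step3 (by positivity)) ?_
  rw [hrpow _ _ (by positivity)]
  exact le_of_eq rfl

lemma meas_inter_le {α : Type*} [MeasurableSpace α] (μ : Measure α) {A B : Set α}
    (hB : μ B ≠ ∞) {s : ℝ} (hs0 : 0 ≤ s) (hs1 : s ≤ 1) :
    μ (A ∩ B) ≤ (μ B) ^ (1 - s) * (μ A) ^ s := by
  rcases eq_or_ne (μ (A ∩ B)) 0 with h0 | h0
  · rw [h0]; exact zero_le
  have hfin : μ (A ∩ B) ≠ ∞ := ne_top_of_le_ne_top hB (measure_mono Set.inter_subset_right)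
  have : μ (A ∩ B) = (μ (A ∩ B)) ^ (1 - s) * (μ (A ∩ B)) ^ s := by
    rw [← ENNReal.rpow_add _ _ h0 hfin, sub_add_cancel, ENNReal.rpow_one]
  rw [this]
  exact mul_le_mul' (ENNReal.rpow_le_rpow (measure_mono Set.inter_subset_right) (by linarith))
    (ENNReal.rpow_le_rpow (measure_mono Set.inter_subset_left) hs0)


lemma exists_box_bound (hp1 : 0 < p1) (hp2 : 0 < p2) (R : ℝ) :
    ∃ (C : ℝ≥0∞) (e : ℝ), C ≠ ∞ ∧ 0 < e ∧ ∀ E : Set (Euc n × Euc m), MeasurableSet E →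
      volume (E ∩ (Metric.ball (0 : Euc n) R) ×ˢ (Metric.ball (0 : Euc m) R)) ≤
        C * Phi n m p1 p2 E ^ e := by
  have hq : (0:ℝ) < p2 / p1 := div_pos hp2 hp1
  set q := p2 / p1 with hqdef
  set B : Set (Euc n) := Metric.ball 0 R with hB
  set B' : Set (Euc m) := Metric.ball 0 R with hB'
  have hc : volume B ≠ ∞ := measure_ball_lt_top.ne
  have hw : volume B' ≠ ∞ := measure_ball_lt_top.ne
  have hXP : ∀ E : Set (Euc n × Euc m),
      (∫⁻ y : Euc m, (volume {x : Euc n | (x, y) ∈ E}) ^ q) = Phi n m p1 p2 E ^ p2 := by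
    intro E
    rw [Phi, ← ENNReal.rpow_mul, one_div_mul_cancel hp2.ne', ENNReal.rpow_one]
  rcases le_or_gt q 1 with hq1 | hq1
  · refine ⟨(volume B) ^ (1 - q), p2, ENNReal.rpow_ne_top_of_nonneg (by linarith) hc, hp2, ?_⟩
    intro E hE
    have hEB : MeasurableSet (E ∩ B ×ˢ B') :=
      hE.inter (measurableSet_ball.prod measurableSet_ball)
    have key : volume (E ∩ B ×ˢ B') = ∫⁻ y, volume {x : Euc n | (x, y) ∈ E ∩ B ×ˢ B'} := by
      rw [Measure.volume_eq_prod, Measure.prod_apply_symm hEB]; rfl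
    rw [key, ← hXP E, ← lintegral_const_mul' _ _ (ENNReal.rpow_ne_top_of_nonneg (by linarith) hc)]
    apply lintegral_mono fun y => ?_
    refine le_trans (measure_mono (fun x hx => ?_)) (meas_inter_le volume hc hq.le hq1)
    exact ⟨hx.1, hx.2.1⟩
  · have hcq : q.HolderConjugate (q / (q - 1)) := Real.HolderConjugate.conjExponent hq1
    set q' : ℝ := q / (q - 1) with hq'def
    have hq'pos : 0 < q' := hcq.symm.pos
    refine ⟨(volume B') ^ (1 / q'), p2 * (1 / q), ENNReal.rpow_ne_top_of_nonneg (by positivity) hw,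
      by positivity, ?_⟩
    intro E hE
    have hv : Measurable fun y : Euc m => volume {x : Euc n | (x, y) ∈ E} :=
      measurable_measure_prodMk_right hE
    have hEB : MeasurableSet (E ∩ B ×ˢ B') :=
      hE.inter (measurableSet_ball.prod measurableSet_ball)
    have key : volume (E ∩ B ×ˢ B') = ∫⁻ y, volume {x : Euc n | (x, y) ∈ E ∩ B ×ˢ B'} := by
      rw [Measure.volume_eq_prod, Measure.prod_apply_symm hEB]; rfl
    have step1 : volume (E ∩ B ×ˢ B') ≤
        ∫⁻ y, (volume {x : Euc n | (x, y) ∈ E}) * B'.indicator (fun _ => (1:ℝ≥0∞)) y := by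
      rw [key]
      apply lintegral_mono fun y => ?_
      by_cases hy : y ∈ B'
      · rw [Set.indicator_of_mem hy, mul_one]
        exact measure_mono fun x hx => hx.1
      · rw [Set.indicator_of_notMem hy, mul_zero]
        have : {x : Euc n | (x, y) ∈ E ∩ B ×ˢ B'} = ∅ := by
          ext x; simp only [Set.mem_setOf_eq, Set.mem_empty_iff_false, iff_false]
          exact fun hx => hy hx.2.2
        rw [this, measure_empty]
    have hindmeas : Measurable (B'.indicator fun _ => (1:ℝ≥0∞)) :=
      measurable_one.indicator (measurableSet_ball (x := (0 : Euc m)) (ε := R))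
    have step2 := ENNReal.lintegral_mul_le_Lp_mul_Lq (volume : Measure (Euc m)) hcq
      hv.aemeasurable (g := B'.indicator fun _ => (1:ℝ≥0∞)) hindmeas.aemeasurable
    have hind : (∫⁻ y, (B'.indicator (fun _ => (1:ℝ≥0∞)) y) ^ q') = volume B' := by
      have : ∀ y, (B'.indicator (fun _ => (1:ℝ≥0∞)) y) ^ q' =
          B'.indicator (fun _ => (1:ℝ≥0∞)) y := by
        intro y
        by_cases hy : y ∈ B'
        · simp [Set.indicator_of_mem hy]
        · simp [Set.indicator_of_notMem hy, ENNReal.zero_rpow_of_pos hq'pos]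
      rw [lintegral_congr this]
      exact lintegral_indicator_one measurableSet_ball
    refine le_trans step1 (le_trans step2 ?_)
    rw [hind, hXP E, ← ENNReal.rpow_mul, mul_comm]

lemma small_bound {C : ℝ≥0∞} (hC : C ≠ ∞) {e : ℝ} (he : 0 < e) {ε : ℝ≥0∞} (hε : 0 < ε) :
    ∃ δ : ℝ≥0∞, 0 < δ ∧ ∀ x : ℝ≥0∞, x ≤ δ → C * x ^ e ≤ ε := by
  rcases eq_or_ne ε ∞ with rfl | hεtop
  · exact ⟨1, one_pos, fun x _ => le_top⟩
  rcases eq_or_ne C 0 with rfl | hC0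
  · exact ⟨1, one_pos, fun x _ => by simp⟩
  refine ⟨(ε / C) ^ (1 / e), ?_, ?_⟩
  · apply ENNReal.rpow_pos (ENNReal.div_pos hε.ne' hC)
    exact (ENNReal.div_lt_top hεtop hC0).ne
  · intro x hx
    have : x ^ e ≤ ε / C := by
      calc x ^ e ≤ ((ε / C) ^ (1 / e)) ^ e := ENNReal.rpow_le_rpow hx he.le
        _ = ε / C := by
          rw [← ENNReal.rpow_mul, one_div_mul_cancel he.ne', ENNReal.rpow_one]
    calc C * x ^ e ≤ C * (ε / C) := mul_le_mul_right this C
      _ ≤ ε := ENNReal.mul_div_le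

lemma exists_tendsto_of_eventually {u : ℕ → ℝ}
    (h : ∀ᶠ j in atTop, |u (j + 1) - u j| ≤ (1 / 2 : ℝ) ^ j) :
    ∃ c : ℝ, Tendsto u atTop (𝓝 c) := by
  obtain ⟨J, hJ⟩ := eventually_atTop.mp h
  have hcauchy : CauchySeq fun i => u (i + J) := by
    apply cauchySeq_of_le_geometric (1/2) ((1/2 : ℝ) ^ J) (by norm_num)
    intro i
    have := hJ (i + J) (by omega)
    rw [Real.dist_eq, abs_sub_comm, show i + 1 + J = i + J + 1 by omega]
    calc |u (i + J + 1) - u (i + J)| ≤ (1/2 : ℝ) ^ (i + J) := this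
      _ = (1/2 : ℝ) ^ J * (1/2) ^ i := by rw [pow_add, mul_comm]
  obtain ⟨c, hc⟩ := cauchySeq_tendsto_of_complete hcauchy
  exact ⟨c, (tendsto_add_atTop_iff_nat J).mp hc⟩

end St12

open St12

/-- Characterization of convergence in truncated norm: a sequence `{f_k}` of
measurable functions on `ℝ^n × ℝ^m` converges to some measurable `g` in the truncated
`L^{(p1,p2)}` norm (i.e. `‖χ_{{|f_k − g| > λ}}‖_{L^{(p1,p2)}} → 0` for every `λ > 0`) if and
only if it is Cauchy in the truncated norm
(`‖χ_{{|f_k − f_l| > λ}}‖_{L^{(p1,p2)}} → 0` as `k, l → ∞`, for every `λ > 0`). -/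
theorem stmt12 (n m : ℕ) (p1 p2 : ℝ) (hp1 : 0 < p1) (hp2 : 0 < p2)
    (f : ℕ → Euc n × Euc m → ℝ) (hmeas : ∀ k, Measurable (f k)) :
    (∃ g : Euc n × Euc m → ℝ, Measurable g ∧ ∀ l : ℝ, 0 < l →
        Tendsto (fun k => mixedNorm p1 p2
            ({z | l < |f k z - g z|}.indicator fun _ => (1 : ℝ))) atTop (𝓝 0)) ↔
      (∀ l : ℝ, 0 < l →
        Tendsto (fun kk : ℕ × ℕ => mixedNorm p1 p2
            ({z | l < |f kk.1 z - f kk.2 z|}.indicator fun _ => (1 : ℝ)))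
          (atTop ×ˢ atTop) (𝓝 0)) := by
  have hMS : ∀ (a b : ℕ) (l : ℝ), MeasurableSet {z : Euc n × Euc m | l < |f a z - f b z|} :=
    fun a b l => measurableSet_lt measurable_const ((hmeas a).sub (hmeas b)).abs
  have hCt : C12 p1 p2 ≠ ∞ := C12_ne_top hp1 hp2
  constructor
  · -- convergence implies Cauchy
    rintro ⟨g, hg, htend⟩ l hl
    have hMg : ∀ (k : ℕ) (l' : ℝ), MeasurableSet {z : Euc n × Euc m | l' < |f k z - g z|} :=
      fun k l' => measurableSet_lt measurable_const ((hmeas k).sub hg).abs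
    rw [ENNReal.tendsto_nhds_zero]
    intro ε hε
    set C := C12 p1 p2 with hCdef
    have h2C : (2 : ℝ≥0∞) * C ≠ ∞ := ENNReal.mul_ne_top (by norm_num) hCt
    set ε' : ℝ≥0∞ := ε / (2 * C) with hε'def
    have hε' : 0 < ε' := ENNReal.div_pos hε.ne' h2C
    have hev1 : ∀ᶠ k in atTop, Phi n m p1 p2 {z | l/2 < |f k z - g z|} ≤ ε' := by
      have h1 := (ENNReal.tendsto_nhds_zero.mp (htend (l/2) (by linarith))) ε' hε'
      filter_upwards [h1] with k hk
      rwa [mixedNorm_eq_Phi hp1 (hMg k (l/2))] at hk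
    have hev2 : ∀ᶠ kk : ℕ × ℕ in atTop ×ˢ atTop,
        Phi n m p1 p2 {z | l/2 < |f kk.1 z - g z|} ≤ ε' ∧
        Phi n m p1 p2 {z | l/2 < |f kk.2 z - g z|} ≤ ε' :=
      (hev1.prod_inl atTop).and (hev1.prod_inr atTop)
    filter_upwards [hev2] with kk hkk
    have hincl : {z : Euc n × Euc m | l < |f kk.1 z - f kk.2 z|} ⊆
        {z | l/2 < |f kk.1 z - g z|} ∪ {z | l/2 < |f kk.2 z - g z|} := by
      intro z hz
      simp only [Set.mem_setOf_eq] at hz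
      by_contra hzc
      simp only [Set.mem_union, Set.mem_setOf_eq, not_or, not_lt] at hzc
      obtain ⟨h1, h2⟩ := hzc
      have habs := abs_sub_le (f kk.1 z) (g z) (f kk.2 z)
      have h2' : |g z - f kk.2 z| ≤ l/2 := by rwa [abs_sub_comm]
      linarith
    calc mixedNorm p1 p2 ({z | l < |f kk.1 z - f kk.2 z|}.indicator fun _ => (1 : ℝ))
        = Phi n m p1 p2 {z | l < |f kk.1 z - f kk.2 z|} :=
          mixedNorm_eq_Phi hp1 (hMS kk.1 kk.2 l)
      _ ≤ Phi n m p1 p2 ({z | l/2 < |f kk.1 z - g z|} ∪ {z | l/2 < |f kk.2 z - g z|}) :=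
          Phi_mono hp1 hp2 hincl
      _ ≤ C * (Phi n m p1 p2 {z | l/2 < |f kk.1 z - g z|} +
            Phi n m p1 p2 {z | l/2 < |f kk.2 z - g z|}) :=
          Phi_union hp1 hp2 (hMg kk.1 (l/2)) (hMg kk.2 (l/2))
      _ ≤ C * (ε' + ε') := mul_le_mul_right (add_le_add hkk.1 hkk.2) C
      _ = (2 * C) * ε' := by rw [← two_mul, ← mul_assoc, mul_comm C 2]
      _ ≤ ε := ENNReal.mul_div_le
  · -- Cauchy implies convergence
    intro hC
    have hCP : ∀ l : ℝ, 0 < l → ∀ ε : ℝ≥0∞, 0 < ε → ∃ N : ℕ, ∀ a b : ℕ, N ≤ a → N ≤ b →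
        Phi n m p1 p2 {z | l < |f a z - f b z|} ≤ ε := by
      intro l hl ε hε
      have h1 := (ENNReal.tendsto_nhds_zero.mp (hC l hl)) ε hε
      rw [Filter.eventually_prod_iff] at h1
      obtain ⟨pa, hpa, pb, hpb, h⟩ := h1
      obtain ⟨Na, hNa⟩ := eventually_atTop.mp hpa
      obtain ⟨Nb, hNb⟩ := eventually_atTop.mp hpb
      refine ⟨max Na Nb, fun a b ha hb => ?_⟩
      have := h (hNa a (le_trans (le_max_left _ _) ha)) (hNb b (le_trans (le_max_right _ _) hb))
      rwa [mixedNorm_eq_Phi hp1 (hMS a b l)] at this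
    -- Step 1: choose thresholds
    have hNex : ∀ j : ℕ, ∃ N : ℕ, ∀ a b : ℕ, N ≤ a → N ≤ b →
        volume ({z : Euc n × Euc m | (1/2:ℝ)^j < |f a z - f b z|} ∩
          (Metric.ball (0 : Euc n) (j:ℝ)) ×ˢ (Metric.ball (0 : Euc m) (j:ℝ))) ≤
            (2⁻¹ : ℝ≥0∞) ^ j := by
      intro j
      obtain ⟨C, e, hCt', he, hbound⟩ := exists_box_bound (n := n) (m := m) hp1 hp2 (j : ℝ)
      have hpow : (0:ℝ≥0∞) < (2⁻¹ : ℝ≥0∞) ^ j :=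
        pos_iff_ne_zero.mpr (pow_ne_zero j (by norm_num))
      obtain ⟨δ, hδ, hsmall⟩ := small_bound hCt' he hpow
      obtain ⟨N, hN⟩ := hCP ((1/2:ℝ)^j) (by positivity) δ hδ
      exact ⟨N, fun a b ha hb =>
        le_trans (hbound _ (hMS a b _)) (hsmall _ (hN a b ha hb))⟩
    choose N hN using hNex
    set κ : ℕ → ℕ := fun j => j + ∑ i ∈ Finset.range (j+1), N i with hκdef
    have hκge : ∀ j, j ≤ κ j := fun j => Nat.le_add_right _ _
    have hκN : ∀ i j : ℕ, i ≤ j → N i ≤ κ j := by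
      intro i j hij
      refine le_trans ?_ (Nat.le_add_left _ _)
      exact Finset.single_le_sum (f := N) (fun _ _ => Nat.zero_le _)
        (Finset.mem_range.mpr (by omega))
    set A : ℕ → Set (Euc n × Euc m) :=
      fun j => {z | (1/2:ℝ)^j < |f (κ j) z - f (κ (j+1)) z|} with hAdef
    have hAmeas : ∀ j, MeasurableSet (A j) := fun j => hMS (κ j) (κ (j+1)) _
    have hA : ∀ j, volume (A j ∩
        (Metric.ball (0 : Euc n) (j:ℝ)) ×ˢ (Metric.ball (0 : Euc m) (j:ℝ))) ≤
          (2⁻¹ : ℝ≥0∞) ^ j :=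
      fun j => hN j (κ j) (κ (j+1)) (hκN j j le_rfl) (hκN j (j+1) (by omega))
    -- Step 2: a.e. convergence of the subsequence
    set S₀ : Set (Euc n × Euc m) :=
      {z | ∃ c : ℝ, Tendsto (fun j => f (κ j) z) atTop (𝓝 c)} with hS₀def
    have hS₀ : MeasurableSet S₀ := measurableSet_exists_tendsto fun j => hmeas (κ j)
    have hnull : volume S₀ᶜ = 0 := by
      have hR : ∀ R : ℕ, volume
          (((Metric.ball (0 : Euc n) (R:ℝ)) ×ˢ (Metric.ball (0 : Euc m) (R:ℝ))) ∩ S₀ᶜ) = 0 := by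
        intro R
        set s : ℕ → Set (Euc n × Euc m) := fun i => A (i + R) ∩
          ((Metric.ball (0 : Euc n) (R:ℝ)) ×ˢ (Metric.ball (0 : Euc m) (R:ℝ))) with hsdef
        have hsum : (∑' i, volume (s i)) ≠ ∞ := by
          have hle : ∀ i, volume (s i) ≤ (2⁻¹ : ℝ≥0∞) ^ i := by
            intro i
            have hsub : s i ⊆ A (i + R) ∩
                ((Metric.ball (0 : Euc n) ((i+R:ℕ):ℝ)) ×ˢ
                  (Metric.ball (0 : Euc m) ((i+R:ℕ):ℝ))) := by
              intro z hz
              refine ⟨hz.1, ?_, ?_⟩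
              · exact Metric.ball_subset_ball (by exact_mod_cast Nat.le_add_left R i) hz.2.1
              · exact Metric.ball_subset_ball (by exact_mod_cast Nat.le_add_left R i) hz.2.2
            refine le_trans (measure_mono hsub) (le_trans (hA (i + R)) ?_)
            exact pow_le_pow_right_of_le_one' (by norm_num) (by omega)
          refine ne_top_of_le_ne_top ?_ (ENNReal.tsum_le_tsum hle)
          rw [ENNReal.tsum_geometric, ENNReal.one_sub_inv_two, inv_inv]
          exact ENNReal.ofNat_ne_top
        have hlimsup := measure_limsup_atTop_eq_zero hsum
        refine measure_mono_null ?_ hlimsup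
        intro z hz
        rw [Filter.mem_limsup_iff_frequently_mem]
        by_contra hfreq
        have hev : ∀ᶠ i in atTop, z ∉ s i := not_frequently.mp hfreq
        have hzS : z ∈ S₀ := by
          obtain ⟨J, hJ⟩ := eventually_atTop.mp hev
          apply exists_tendsto_of_eventually
          rw [eventually_atTop]
          refine ⟨J + R, fun j hj => ?_⟩
          have hzA : z ∉ A j := by
            have h1 := hJ (j - R) (by omega)
            rw [hsdef] at h1
            simp only [Set.mem_inter_iff, not_and] at h1
            rw [show j - R + R = j by omega] at h1
            exact fun hAj => h1 hAj hz.1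
          rw [hAdef] at hzA
          simp only [Set.mem_setOf_eq, not_lt] at hzA
          rwa [abs_sub_comm]
        exact hz.2 hzS
      have hcover : S₀ᶜ ⊆ ⋃ R : ℕ,
          (((Metric.ball (0 : Euc n) (R:ℝ)) ×ˢ (Metric.ball (0 : Euc m) (R:ℝ))) ∩ S₀ᶜ) := by
        intro z hz
        obtain ⟨R, hR'⟩ := exists_nat_gt (max ‖z.1‖ ‖z.2‖)
        refine Set.mem_iUnion.mpr ⟨R, ⟨?_, ?_⟩, hz⟩
        · rw [mem_ball_zero_iff]; exact lt_of_le_of_lt (le_max_left _ _) hR'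
        · rw [mem_ball_zero_iff]; exact lt_of_le_of_lt (le_max_right _ _) hR'
      exact measure_mono_null hcover (measure_iUnion_null hR)
    -- Step 3: define the limit function
    set F : ℕ → Euc n × Euc m → ℝ := fun j => S₀.indicator (f (κ j)) with hFdef
    have hFmeas : ∀ j, Measurable (F j) := fun j => (hmeas (κ j)).indicator hS₀
    have hFconv : ∀ z, ∃ c : ℝ, Tendsto (fun j => F j z) atTop (𝓝 c) := by
      intro z
      by_cases hz : z ∈ S₀
      · have hz2 := hz
        obtain ⟨c, hc⟩ := (hz2 : ∃ c : ℝ, Tendsto (fun j => f (κ j) z) atTop (𝓝 c))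
        refine ⟨c, hc.congr fun j => ?_⟩
        exact (Set.indicator_of_mem hz _).symm
      · exact ⟨0, by simp only [hFdef, Set.indicator_of_notMem hz]; exact tendsto_const_nhds⟩
    set g : Euc n × Euc m → ℝ := fun z => limUnder atTop (fun j => F j z) with hgdef
    have hgt : ∀ z, Tendsto (fun j => F j z) atTop (𝓝 (g z)) :=
      fun z => tendsto_nhds_limUnder (hFconv z)
    have hgmeas : Measurable g :=
      measurable_of_tendsto_metrizable hFmeas (tendsto_pi_nhds.mpr hgt)
    have hgS : ∀ z ∈ S₀, Tendsto (fun j => f (κ j) z) atTop (𝓝 (g z)) :=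
      fun z hz => (hgt z).congr fun j => Set.indicator_of_mem hz _
    -- Step 4: conclude
    refine ⟨g, hgmeas, fun l hl => ?_⟩
    have hMg : ∀ (k : ℕ) (l' : ℝ), MeasurableSet {z : Euc n × Euc m | l' < |f k z - g z|} :=
      fun k l' => measurableSet_lt measurable_const ((hmeas k).sub hgmeas).abs
    have hfun : (fun k => mixedNorm p1 p2
        ({z | l < |f k z - g z|}.indicator fun _ => (1 : ℝ))) =
        fun k => Phi n m p1 p2 {z | l < |f k z - g z|} :=
      funext fun k => mixedNorm_eq_Phi hp1 (hMg k l)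
    rw [hfun, ENNReal.tendsto_nhds_zero]
    intro ε hε
    set C := C12 p1 p2 with hCdef
    set ε' : ℝ≥0∞ := ε / C with hε'def
    have hε' : 0 < ε' := ENNReal.div_pos hε.ne' hCt
    obtain ⟨K, hK⟩ := hCP (l/2) (by linarith) ε' hε'
    rw [eventually_atTop]
    refine ⟨K, fun k hk => ?_⟩
    set Ek : Set (Euc n × Euc m) := {z | l < |f k z - g z|} with hEkdef
    have hEkmeas : MeasurableSet Ek := hMg k l
    have hliminf : Phi n m p1 p2 (Ek ∩ S₀) ≤
        atTop.liminf fun j => Phi n m p1 p2 {z | l/2 < |f k z - f (κ j) z|} := by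
      apply Phi_liminf hp1 hp2 (fun j => hMS k (κ j) (l/2))
      rintro z ⟨hzE, hzS⟩
      have htendz := hgS z hzS
      obtain ⟨J, hJ⟩ := (Metric.tendsto_atTop.mp htendz) (l/2) (by linarith)
      rw [eventually_atTop]
      refine ⟨J, fun j hj => ?_⟩
      have hd := hJ j hj
      rw [Real.dist_eq] at hd
      have habs := abs_sub_le (f k z) (f (κ j) z) (g z)
      have hzE' : l < |f k z - g z| := hzE
      simp only [Set.mem_setOf_eq]
      have h2 : |f (κ j) z - g z| < l/2 := hd
      linarith
    have hliminf2 : (atTop.liminf fun j =>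
        Phi n m p1 p2 {z | l/2 < |f k z - f (κ j) z|}) ≤ ε' := by
      have hev : ∀ᶠ j in atTop, Phi n m p1 p2 {z | l/2 < |f k z - f (κ j) z|} ≤ ε' := by
        rw [eventually_atTop]
        exact ⟨K, fun j hj => hK k (κ j) hk (le_trans hj (hκge j))⟩
      calc (atTop.liminf fun j => Phi n m p1 p2 {z | l/2 < |f k z - f (κ j) z|})
          ≤ atTop.liminf (fun _ => ε') := Filter.liminf_le_liminf hev
        _ = ε' := Filter.liminf_const ε'
    have hzero : Phi n m p1 p2 (Ek ∩ S₀ᶜ) = 0 :=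
      Phi_null hp1 hp2 (measure_mono_null Set.inter_subset_right hnull)
    calc Phi n m p1 p2 Ek ≤ Phi n m p1 p2 ((Ek ∩ S₀) ∪ (Ek ∩ S₀ᶜ)) := by
          apply Phi_mono hp1 hp2
          intro z hz
          by_cases hzS : z ∈ S₀
          · exact Or.inl ⟨hz, hzS⟩
          · exact Or.inr ⟨hz, hzS⟩
      _ ≤ C * (Phi n m p1 p2 (Ek ∩ S₀) + Phi n m p1 p2 (Ek ∩ S₀ᶜ)) :=
          Phi_union hp1 hp2 (hEkmeas.inter hS₀) (hEkmeas.inter hS₀.compl)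
      _ ≤ C * (ε' + 0) := by
          apply mul_le_mul_right
          exact add_le_add (le_trans hliminf hliminf2) (le_of_eq hzero)
      _ = C * (ε / C) := by rw [add_zero]
      _ ≤ ε := ENNReal.mul_div_le
end
end
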